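/- arXiv:2106.00803 — 6 statements merged into one kernel-verified Lean document; each statement's English description precedes it below -/
import Mathlib

section
/- For every g ∈ ℚ[[q]], every a₁ ∈ ℚ with a₁ ≠ 0, and every a₂ ∈ ℚ, there exists a unique formal power series f ∈ ℚ[[q]] whose coefficient of q⁰ is 0, whose coefficient of q¹ is a₁, and whose coefficient of q² is a₂, satisfying the Schwarzian equation S_q f + g = 0. In particular every Schwarzian equation S_q f + g = 0 has a solution in the class f(0) = 0, f'(0) ≠ 0. -/
/-! The Schwarzian equation `S_q f + g = 0` is a first-order Riccati equation
`u' = u²/2 - g` for the logarithmic derivative `u = f''/f'`, followed by the linear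
equation `h' = u h` for `h = f'` and a final integration `f' = h`. Each of these has the form
`y' = Φ y` with `Φ` non-expanding for the `X`-adic metric, and such an equation has exactly
one formal solution for each constant term, since `y' = Φ y` determines the coefficient of
`Xⁿ⁺¹` from those of lower degree. The prescribed `f(0), f'(0), f''(0)` fix the three
constants, `u(0)` being `f''(0)/f'(0) = 2a₂/a₁`. -/

/-- The formal derivative `df/dq` on `ℚ[[q]]`. -/
noncomputable def sder (f : PowerSeries ℚ) : PowerSeries ℚ := PowerSeries.derivative ℚ f

/-- The formal Schwarzian derivative
`S_q f = (f''/f')' − (1/2)(f''/f')²`, for `f` with invertible `f'`. -/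
noncomputable def schwarzian (f : PowerSeries ℚ) : PowerSeries ℚ :=
  sder (sder (sder f) * (sder f)⁻¹)
    - PowerSeries.C (1 / 2 : ℚ) * (sder (sder f) * (sder f)⁻¹) ^ 2

open scoped PowerSeries

namespace PowerSeries

section CommRing

variable {R : Type*} [CommRing R]

def XAdicNonexpanding (Φ : R⟦X⟧ → R⟦X⟧) : Prop :=
  ∀ n u v, X ^ n ∣ u - v → X ^ n ∣ Φ u - Φ v

theorem xAdicNonexpanding_const (w : R⟦X⟧) : XAdicNonexpanding fun _ : R⟦X⟧ ↦ w := by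
  intro n u v _
  simp

theorem xAdicNonexpanding_mul_left (w : R⟦X⟧) : XAdicNonexpanding (w * ·) := by
  intro n u v h
  rw [← mul_sub]
  exact dvd_mul_of_dvd_right h w

end CommRing

section CharZero

variable {K : Type*} [Field K] [CharZero K]

theorem X_pow_succ_dvd_of_dvd_derivative {w : K⟦X⟧} {n : ℕ} (h0 : constantCoeff w = 0)
    (hd : X ^ n ∣ d⁄dX K w) : X ^ (n + 1) ∣ w := by
  rw [X_pow_dvd_iff] at hd ⊢
  rintro (_ | m) hm
  · simpa using h0
  · have := hd m (by omega)
    rw [coeff_derivative] at this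
    exact (mul_eq_zero.mp this).resolve_right (by norm_cast)

theorem eq_of_derivative_eq_of_xAdicNonexpanding {Φ : K⟦X⟧ → K⟦X⟧}
    (hΦ : XAdicNonexpanding Φ) {u v : K⟦X⟧} (h0 : constantCoeff u = constantCoeff v)
    (hu : d⁄dX K u = Φ u) (hv : d⁄dX K v = Φ v) : u = v := by
  have hdvd : ∀ n, X ^ n ∣ u - v := by
    intro n
    induction n with
    | zero => simp
    | succ n ih =>
      refine X_pow_succ_dvd_of_dvd_derivative (by simp [h0]) ?_
      rw [map_sub, hu, hv]
      exact hΦ n u v ih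
  ext n
  rw [← sub_eq_zero, ← map_sub]
  exact X_pow_dvd_iff.mp (hdvd (n + 1)) n (lt_add_one n)

/-- Coefficients of the solution of `y' = Φ y`, `y(0) = c`. -/
noncomputable def odeSolutionCoeff (Φ : K⟦X⟧ → K⟦X⟧) (c : K) : ℕ → K
  | 0 => c
  | n + 1 =>
    coeff n (Φ (mk fun i ↦ if i ≤ n then odeSolutionCoeff Φ c i else 0)) / (n + 1)

theorem exists_derivative_eq_of_xAdicNonexpanding {Φ : K⟦X⟧ → K⟦X⟧}
    (hΦ : XAdicNonexpanding Φ) (c : K) : ∃ u, constantCoeff u = c ∧ d⁄dX K u = Φ u := by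
  refine ⟨mk (odeSolutionCoeff Φ c), by simp [odeSolutionCoeff], ?_⟩
  ext n
  set t : K⟦X⟧ := mk fun i ↦ if i ≤ n then odeSolutionCoeff Φ c i else 0
  have ht : X ^ (n + 1) ∣ mk (odeSolutionCoeff Φ c) - t := by
    rw [X_pow_dvd_iff]
    intro m hm
    simp [t, Nat.le_of_lt_succ hm]
  have hcoeff := X_pow_dvd_iff.mp (hΦ _ _ _ ht) n (lt_add_one n)
  rw [map_sub, sub_eq_zero] at hcoeff
  rw [coeff_derivative, coeff_mk, odeSolutionCoeff, hcoeff,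
    div_mul_cancel₀ _ (Nat.cast_add_one_ne_zero n)]

theorem existsUnique_derivative_eq_of_xAdicNonexpanding {Φ : K⟦X⟧ → K⟦X⟧}
    (hΦ : XAdicNonexpanding Φ) (c : K) : ∃! u, constantCoeff u = c ∧ d⁄dX K u = Φ u := by
  obtain ⟨u, hu0, hu⟩ := exists_derivative_eq_of_xAdicNonexpanding hΦ c
  exact ⟨u, ⟨hu0, hu⟩, fun v ⟨hv0, hv⟩ ↦
    eq_of_derivative_eq_of_xAdicNonexpanding hΦ (hv0.trans hu0.symm) hv hu⟩

end CharZero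

section Riccati

variable {K : Type*} [Field K]

noncomputable def riccati (g u : K⟦X⟧) : K⟦X⟧ :=
  C (1 / 2 : K) * u ^ 2 - g

theorem xAdicNonexpanding_riccati (g : K⟦X⟧) : XAdicNonexpanding (riccati g) := by
  intro n u v h
  rw [riccati, riccati, sub_sub_sub_cancel_right, ← mul_sub, sq_sub_sq]
  exact dvd_mul_of_dvd_right (dvd_mul_of_dvd_right h _) _

end Riccati

end PowerSeries

open PowerSeries

theorem coeff_sder (f : ℚ⟦X⟧) (n : ℕ) : coeff n (sder f) = coeff (n + 1) f * (n + 1) :=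
  coeff_derivative f n

theorem coeff_one_eq_constantCoeff_sder (f : ℚ⟦X⟧) : coeff 1 f = constantCoeff (sder f) := by
  simpa using (coeff_sder f 0).symm

theorem coeff_two_eq_iff_constantCoeff {f u : ℚ⟦X⟧} {a₁ a₂ : ℚ} (ha₁ : a₁ ≠ 0)
    (hf : constantCoeff (sder f) = a₁) (hu : sder (sder f) = u * sder f) :
    coeff 2 f = a₂ ↔ constantCoeff u = 2 * a₂ / a₁ := by
  have h2 : constantCoeff u * a₁ = coeff 2 f * 2 := by
    rw [← hf, ← map_mul, ← hu, ← coeff_zero_eq_constantCoeff_apply, coeff_sder, coeff_sder]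
    norm_num
  rw [eq_div_iff ha₁, h2]
  constructor <;> intro h <;> linarith

theorem schwarzian_add_eq_zero_iff {f g u : ℚ⟦X⟧} (hf : constantCoeff (sder f) ≠ 0)
    (hu : sder (sder f) = u * sder f) : schwarzian f + g = 0 ↔ sder u = riccati g u := by
  obtain rfl : sder (sder f) * (sder f)⁻¹ = u := ((eq_mul_inv_iff_mul_eq hf).mpr hu.symm).symm
  rw [schwarzian, riccati]
  constructor <;> intro h <;> linear_combination h

/-- For every `g ∈ ℚ[[q]]`, `a₁ ∈ ℚ` nonzero and `a₂ ∈ ℚ`, there is a unique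
`f ∈ ℚ[[q]]` with coefficients `0, a₁, a₂` in degrees `0, 1, 2` satisfying
the Schwarzian equation `S_q f + g = 0`.  In particular every Schwarzian
equation has a solution in the class `f(0) = 0`, `f'(0) ≠ 0`. -/
theorem schwarzian_equation_existsUnique (g : PowerSeries ℚ) (a₁ a₂ : ℚ) (ha₁ : a₁ ≠ 0) :
    ∃! f : PowerSeries ℚ,
      PowerSeries.coeff 0 f = 0 ∧
      PowerSeries.coeff 1 f = a₁ ∧
      PowerSeries.coeff 2 f = a₂ ∧
      schwarzian f + g = 0 := by
  obtain ⟨U, ⟨hU0, hU⟩, U_unique⟩ :=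
    existsUnique_derivative_eq_of_xAdicNonexpanding (xAdicNonexpanding_riccati g) (2 * a₂ / a₁)
  obtain ⟨H, ⟨hH0, hH⟩, H_unique⟩ :=
    existsUnique_derivative_eq_of_xAdicNonexpanding (xAdicNonexpanding_mul_left U) a₁
  obtain ⟨F, ⟨hF0, hF⟩, F_unique⟩ :=
    existsUnique_derivative_eq_of_xAdicNonexpanding (xAdicNonexpanding_const H) 0
  refine ⟨F, ?_, ?_⟩
  · have hF' : sder F = H := hF
    have hFa₁ : constantCoeff (sder F) = a₁ := by rw [hF', hH0]
    have hFU : sder (sder F) = U * sder F := by rw [hF']; exact hH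
    exact ⟨by simpa using hF0, by rw [coeff_one_eq_constantCoeff_sder, hFa₁],
      (coeff_two_eq_iff_constantCoeff ha₁ hFa₁ hFU).mpr hU0,
      (schwarzian_add_eq_zero_iff (hFa₁ ▸ ha₁) hFU).mpr hU⟩
  · rintro f ⟨h0, h1, h2, hS⟩
    have hfa₁ : constantCoeff (sder f) = a₁ := by rw [← coeff_one_eq_constantCoeff_sder, h1]
    set u := sder (sder f) * (sder f)⁻¹
    have hfu : sder (sder f) = u * sder f := ((eq_mul_inv_iff_mul_eq (hfa₁ ▸ ha₁)).mp rfl).symm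
    have huU : u = U := U_unique u ⟨(coeff_two_eq_iff_constantCoeff ha₁ hfa₁ hfu).mp h2,
      (schwarzian_add_eq_zero_iff (hfa₁ ▸ ha₁) hfu).mp hS⟩
    have hfH : sder f = H := H_unique _ ⟨hfa₁, huU ▸ hfu⟩
    exact F_unique f ⟨by simpa using h0, hfH⟩
end

section
/- Let ψ, η ∈ ℚ[[q]] with ψ(0) = 1 (so ψ is a unit), and let f ∈ ℚ[[q]] have invertible derivative f'. Define the operators D₀(g) = ψ⁻¹·g' and D₂(g) = ψ⁻¹·(g' + η·g) on ℚ[[q]]. Then D₀(f) is a unit; setting R = D₂(D₀(f))·(D₀(f))⁻¹, one has R = ψ⁻¹·(f''/f' + η − ψ'/ψ), and the identity D₂(R) − (1/2)·R² = ψ⁻²·( S_q f + (η − ψ'/ψ)' + (1/2)·(η − ψ'/ψ)² ) holds. (This is the change-of-derivation formula relating the Schwarzian of the twisted derivation ∂_{q,t} = tψ⁻¹(∂_q + (i/2)η) to the ordinary formal Schwarzian S_q f, after stripping the grading variable t.) -/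
/-- The operator `D₀(g) = ψ⁻¹·g'`. -/
noncomputable def D0 (ψ g : PowerSeries ℚ) : PowerSeries ℚ := ψ⁻¹ * sder g

/-- The operator `D₂(g) = ψ⁻¹·(g' + η·g)`. -/
noncomputable def D2 (ψ η g : PowerSeries ℚ) : PowerSeries ℚ := ψ⁻¹ * (sder g + η * g)

/-! With `θ = η − ψ'/ψ`, the twisted operator satisfies `D₂(ψ⁻¹h) = ψ⁻²(h' + θh)`.
Applied to `h = f'` this gives `R = ψ⁻¹(u + θ)` with `u = f''/f'`, and applied once more
`D₂(R) − R²/2 = ψ⁻²((u + θ)' + θ(u + θ) − (u + θ)²/2)`, in which the cross terms `uθ` cancel,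
leaving `ψ⁻²(u' − u²/2 + θ' + θ²/2)`. -/

lemma sder_mul (a b : PowerSeries ℚ) : sder (a * b) = a * sder b + b * sder a :=
  (PowerSeries.derivative ℚ).leibniz a b

lemma sder_add (a b : PowerSeries ℚ) : sder (a + b) = sder a + sder b := map_add _ _ _

lemma sder_inv (a : PowerSeries ℚ) : sder a⁻¹ = -a⁻¹ ^ 2 * sder a :=
  PowerSeries.derivative_inv' a

lemma D2_inv_mul (ψ η h : PowerSeries ℚ) :
    D2 ψ η (ψ⁻¹ * h) = ψ⁻¹ ^ 2 * (sder h + (η - sder ψ * ψ⁻¹) * h) := by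
  rw [D2, sder_mul, sder_inv]
  ring

lemma PowerSeries.isUnit_inv {k : Type*} [Field k] {ψ : PowerSeries k}
    (hψ : PowerSeries.constantCoeff ψ ≠ 0) : IsUnit ψ⁻¹ := by
  rw [PowerSeries.isUnit_iff_constantCoeff, PowerSeries.constantCoeff_inv]
  exact (inv_ne_zero hψ).isUnit

lemma C_half_mul_two : PowerSeries.C (1 / 2 : ℚ) * 2 = 1 := by
  rw [← map_ofNat PowerSeries.C 2, ← map_mul]
  norm_num

/-- Change-of-derivation formula for the Schwarzian: with `ψ(0) = 1` and `f'`
invertible, `D₀(f)` is a unit; `R = D₂(D₀ f)·(D₀ f)⁻¹` equals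
`ψ⁻¹·(f''/f' + η − ψ'/ψ)`, and
`D₂(R) − (1/2)R² = ψ⁻²·(S_q f + (η − ψ'/ψ)' + (1/2)(η − ψ'/ψ)²)`. -/
theorem twisted_schwarzian_formula (ψ η f : PowerSeries ℚ)
    (hψ : PowerSeries.constantCoeff ψ = 1)
    (hf : IsUnit (sder f)) :
    IsUnit (D0 ψ f) ∧
    D2 ψ η (D0 ψ f) * (D0 ψ f)⁻¹
      = ψ⁻¹ * (sder (sder f) * (sder f)⁻¹ + η - sder ψ * ψ⁻¹) ∧
    D2 ψ η (D2 ψ η (D0 ψ f) * (D0 ψ f)⁻¹)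
        - PowerSeries.C (1 / 2 : ℚ) * (D2 ψ η (D0 ψ f) * (D0 ψ f)⁻¹) ^ 2
      = ψ⁻¹ ^ 2 *
          (schwarzian f + sder (η - sder ψ * ψ⁻¹)
            + PowerSeries.C (1 / 2 : ℚ) * (η - sder ψ * ψ⁻¹) ^ 2) := by
  have hD0 : IsUnit (D0 ψ f) := (PowerSeries.isUnit_inv (by simp [hψ])).mul hf
  have hD0_inv : D0 ψ f * (D0 ψ f)⁻¹ = 1 :=
    PowerSeries.mul_inv_cancel _ (PowerSeries.isUnit_iff_constantCoeff.mp hD0).ne_zero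
  have hf_inv : sder f * (sder f)⁻¹ = 1 :=
    PowerSeries.mul_inv_cancel _ (PowerSeries.isUnit_iff_constantCoeff.mp hf).ne_zero
  set u := sder (sder f) * (sder f)⁻¹
  set θ := η - sder ψ * ψ⁻¹
  have hR : D2 ψ η (D0 ψ f) * (D0 ψ f)⁻¹ = ψ⁻¹ * (u + η - sder ψ * ψ⁻¹) := by
    rw [D0] at hD0_inv ⊢
    rw [D2_inv_mul]
    linear_combination (-ψ⁻¹ ^ 2 * sder (sder f) * (ψ⁻¹ * sder f)⁻¹) * hf_inv
      + ψ⁻¹ * (u + θ) * hD0_inv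
  refine ⟨hD0, hR, ?_⟩
  rw [hR, add_sub_assoc, D2_inv_mul, sder_add, schwarzian]
  linear_combination -ψ⁻¹ ^ 2 * θ * (u + θ) * C_half_mul_two
end

section
/- Let r ≥ 0 and let b, b₁, …, b_r ∈ R[[q]] each have zero constant term (i.e. lie in q·R[[q]]). Then there exist unique φ, φ₁, …, φ_r ∈ ℚ[[q]], each with zero constant term, such that, writing E for the evaluation homomorphism E_{φ,φ₁,…,φ_r}, one has φ = −E(b) and φ_j = −E(b_j) for every j = 1,…,r. Equivalently: there is a unique substitution q ↦ g(q) = q·exp(φ) ∈ q + q²ℚ[[q]], q_j ↦ g_j(q) = exp(φ_j) ∈ 1 + qℚ[[q]], which transforms the formal expression Q·exp(B), where Q = q^{[δE|]}·q₁^{D₁}⋯q_r^{D_r} and B = b·[δE|] + b₁D₁ + ⋯ + b_rD_r, into q^{[δE|]}. -/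
/-- The Laurent polynomial ring `R = ℚ[q₁^{±1},…,q_r^{±1}]`, realised as the
group algebra of `ℤ^r` over `ℚ`. -/
abbrev LaurentR (r : ℕ) : Type := AddMonoidAlgebra ℚ (Fin r → ℤ)

/-- The formal exponential of `φ ∈ ℚ[[q]]`: for `φ` with zero constant term,
this is `∑ₙ φⁿ/n!` (each coefficient is a finite sum). -/
noncomputable def expOf (φ : PowerSeries ℚ) : PowerSeries ℚ :=
  PowerSeries.mk fun k =>
    ∑ n ∈ Finset.range (k + 1),
      ((n.factorial : ℚ))⁻¹ * PowerSeries.coeff k (φ ^ n)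

/-- Integer powers `uⁿ` of a unit `u` of `ℚ[[q]]` (negative powers are taken
via the power series inverse). -/
noncomputable def zpowPS (u : PowerSeries ℚ) (n : ℤ) : PowerSeries ℚ :=
  u ^ n.toNat * u⁻¹ ^ (-n).toNat

/-- The `ℚ`-algebra map `R → ℚ[[q]]` sending `q_j ↦ exp(φ_j)` (applied to an
element of the Laurent polynomial ring). -/
noncomputable def coeffMap {r : ℕ} (φs : Fin r → PowerSeries ℚ) (x : LaurentR r) :
    PowerSeries ℚ :=
  ∑ m ∈ x.coeff.support, PowerSeries.C (x.coeff m) * ∏ j, zpowPS (expOf (φs j)) (m j)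

/-- The evaluation homomorphism `E_{φ,φ₁,…,φ_r} : R[[q]] → ℚ[[q]]`: apply
`coeffMap φs` coefficientwise and substitute `q ↦ q·exp(φ)`. -/
noncomputable def evalE {r : ℕ} (φ : PowerSeries ℚ) (φs : Fin r → PowerSeries ℚ)
    (b : PowerSeries (LaurentR r)) : PowerSeries ℚ :=
  PowerSeries.mk fun m =>
    ∑ k ∈ Finset.range (m + 1),
      PowerSeries.coeff m
        (coeffMap φs (PowerSeries.coeff k b) *
          (PowerSeries.X * expOf φ) ^ k)

/-!
The map `(φ, φ₁, …, φ_r) ↦ (−E(b), −E(b₁), …, −E(b_r))` is a contraction for the `q`-adic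
filtration: since `b` and the `b_j` have no constant term, every term of `E(b)` carries a factor
`(q·exp φ)ᵏ` with `k ≥ 1`, so inputs agreeing modulo `qⁿ` give outputs agreeing modulo `qⁿ⁺¹`.
A contraction of a space of coefficient sequences has a unique fixed point, whose `t`-th
coefficient is already attained by the `(t+1)`-st iterate of any starting point.
-/

open PowerSeries Function

theorem Function.existsUnique_isFixedPt_of_contracting {α β : Type*} [Nonempty α]
    (e : α ≃ (ℕ → β)) {F : α → α}
    (hF : ∀ n x y, (∀ t < n, e x t = e y t) → ∀ t < n + 1, e (F x) t = e (F y) t) :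
    ∃! x, IsFixedPt F x := by
  have iterate_agree : ∀ n x y, ∀ t < n, e (F^[n] x) t = e (F^[n] y) t := by
    intro n
    induction n with
    | zero => intro x y t ht; omega
    | succ n ih =>
      intro x y
      rw [iterate_succ_apply', iterate_succ_apply']
      exact hF n _ _ (ih x y)
  obtain ⟨x₀⟩ := ‹Nonempty α›
  set L := e.symm fun t => e (F^[t + 1] x₀) t
  have L_agree : ∀ n, ∀ t < n, e L t = e (F^[n] x₀) t := by
    intro n t ht
    obtain ⟨d, rfl⟩ := Nat.exists_eq_add_of_lt ht
    rw [Equiv.apply_symm_apply, show t + d + 1 = t + 1 + d by omega, iterate_add_apply F (t + 1) d]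
    exact iterate_agree (t + 1) x₀ _ t (Nat.lt_add_one t)
  have hL : IsFixedPt F L := e.injective <| funext fun t =>
    calc e (F L) t = e (F (F^[t] x₀)) t := hF t L _ (L_agree t) t (Nat.lt_add_one t)
      _ = e L t := by rw [L_agree (t + 1) t (Nat.lt_add_one t), iterate_succ_apply' F t x₀]
  refine ⟨L, hL, fun y hy => e.injective <| funext fun t => ?_⟩
  simpa only [(hy.iterate _).eq, (hL.iterate _).eq] using
    iterate_agree (t + 1) y L t (Nat.lt_add_one t)

namespace PowerSeries

section Congruence

variable {R : Type*} [CommRing R]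

theorem mk_span_X_pow_eq_iff {n : ℕ} {f g : R⟦X⟧} :
    Ideal.Quotient.mk (Ideal.span {X ^ n}) f = Ideal.Quotient.mk _ g ↔
      ∀ t < n, coeff t f = coeff t g := by
  simp only [Ideal.Quotient.eq, Ideal.mem_span_singleton, X_pow_dvd_iff, map_sub, sub_eq_zero]

noncomputable def coeffsEquiv (R ι : Type*) [CommRing R] :
    R⟦X⟧ × (ι → R⟦X⟧) ≃ (ℕ → R × (ι → R)) where
  toFun p t := (coeff t p.1, fun j => coeff t (p.2 j))
  invFun s := (PowerSeries.mk fun t => (s t).1, fun j => PowerSeries.mk fun t => (s t).2 j)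
  left_inv p := by ext <;> simp
  right_inv s := by ext <;> simp

theorem coeffsEquiv_agree_iff {ι : Type*} {n : ℕ} {p q : R⟦X⟧ × (ι → R⟦X⟧)} :
    (∀ t < n, coeffsEquiv R ι p t = coeffsEquiv R ι q t) ↔
      Ideal.Quotient.mk (Ideal.span {X ^ n}) p.1 = Ideal.Quotient.mk _ q.1 ∧
        ∀ j, Ideal.Quotient.mk (Ideal.span {X ^ n}) (p.2 j) = Ideal.Quotient.mk _ (q.2 j) := by
  simp only [mk_span_X_pow_eq_iff, coeffsEquiv, Equiv.coe_fn_mk, Prod.ext_iff, funext_iff]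
  grind

end Congruence

theorem map_inv_eq_of_map_eq {k S : Type*} [Field k] [Semiring S] (f : k⟦X⟧ →+* S)
    {u v : k⟦X⟧} (hu : constantCoeff u ≠ 0) (hv : constantCoeff v ≠ 0) (h : f u = f v) :
    f u⁻¹ = f v⁻¹ :=
  calc f u⁻¹ = f u⁻¹ * f (v * v⁻¹) := by rw [PowerSeries.mul_inv_cancel v hv, map_one, mul_one]
    _ = f (u⁻¹ * u) * f v⁻¹ := by rw [map_mul, map_mul, h, mul_assoc]
    _ = f v⁻¹ := by rw [PowerSeries.inv_mul_cancel u hu, map_one, one_mul]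

end PowerSeries

section Evaluation

variable {S : Type*} [CommSemiring S] (f : ℚ⟦X⟧ →+* S)

theorem constantCoeff_expOf (φ : ℚ⟦X⟧) : constantCoeff (expOf φ) = 1 := by
  rw [← coeff_zero_eq_constantCoeff_apply]
  simp [expOf]

theorem expOf_congr {n : ℕ} {φ ψ : ℚ⟦X⟧}
    (h : Ideal.Quotient.mk (Ideal.span {X ^ n}) φ = Ideal.Quotient.mk _ ψ) :
    Ideal.Quotient.mk (Ideal.span {X ^ n}) (expOf φ) = Ideal.Quotient.mk _ (expOf ψ) := by
  have pow_agree (k : ℕ) : ∀ t < n, coeff t (φ ^ k) = coeff t (ψ ^ k) :=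
    mk_span_X_pow_eq_iff.1 (by rw [map_pow, map_pow, h])
  rw [mk_span_X_pow_eq_iff]
  intro t ht
  simp only [expOf, coeff_mk]
  exact Finset.sum_congr rfl fun k _ => by rw [pow_agree k t ht]

theorem zpowPS_congr {u v : ℚ⟦X⟧} (hu : constantCoeff u ≠ 0) (hv : constantCoeff v ≠ 0)
    (h : f u = f v) (m : ℤ) : f (zpowPS u m) = f (zpowPS v m) := by
  simp only [zpowPS, map_mul, map_pow, h, map_inv_eq_of_map_eq f hu hv h]

theorem coeffMap_congr {r : ℕ} {φs ψs : Fin r → ℚ⟦X⟧}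
    (h : ∀ j, f (expOf (φs j)) = f (expOf (ψs j))) (x : LaurentR r) :
    f (coeffMap φs x) = f (coeffMap ψs x) := by
  have expOf_ne_zero : ∀ φ, constantCoeff (expOf φ) ≠ 0 := by simp [constantCoeff_expOf]
  simp only [coeffMap, map_sum, map_mul, map_prod,
    zpowPS_congr f (expOf_ne_zero _) (expOf_ne_zero _) (h _)]

theorem coeffMap_zero {r : ℕ} (φs : Fin r → ℚ⟦X⟧) : coeffMap φs (0 : LaurentR r) = 0 := by
  simp [coeffMap]

variable {r : ℕ} {b : PowerSeries (LaurentR r)}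

theorem constantCoeff_evalE (hb : constantCoeff b = 0) (φ : ℚ⟦X⟧) (φs : Fin r → ℚ⟦X⟧) :
    constantCoeff (evalE φ φs b) = 0 := by
  rw [← coeff_zero_eq_constantCoeff_apply]
  simp [evalE, hb, coeffMap_zero]

theorem evalE_congr (hb : constantCoeff b = 0) {n : ℕ} {φ ψ : ℚ⟦X⟧} {φs ψs : Fin r → ℚ⟦X⟧}
    (h : Ideal.Quotient.mk (Ideal.span {X ^ n}) φ = Ideal.Quotient.mk _ ψ)
    (hs : ∀ j, Ideal.Quotient.mk (Ideal.span {X ^ n}) (φs j) = Ideal.Quotient.mk _ (ψs j)) :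
    Ideal.Quotient.mk (Ideal.span {X ^ (n + 1)}) (evalE φ φs b) =
      Ideal.Quotient.mk _ (evalE ψ ψs b) := by
  rw [mk_span_X_pow_eq_iff]
  intro m hm
  simp only [evalE, coeff_mk]
  refine Finset.sum_congr rfl fun k _ => ?_
  obtain rfl | hk := Nat.eq_zero_or_pos k
  · simp [hb, coeffMap_zero]
  have factor_agree :
      Ideal.Quotient.mk (Ideal.span {X ^ n}) (coeffMap φs (coeff k b) * expOf φ ^ k) =
        Ideal.Quotient.mk _ (coeffMap ψs (coeff k b) * expOf ψ ^ k) := by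
    rw [map_mul, map_mul, map_pow, map_pow, expOf_congr h,
      coeffMap_congr _ (fun j => expOf_congr (hs j))]
  have split_X_pow : ∀ A E : ℚ⟦X⟧, A * (X * E) ^ k = X ^ k * (A * E ^ k) := fun A E => by ring
  rw [split_X_pow, split_X_pow, coeff_X_pow_mul', coeff_X_pow_mul']
  split_ifs
  · exact mk_span_X_pow_eq_iff.1 factor_agree _ (by omega)
  · rfl

end Evaluation

section Normalization

variable {r : ℕ} (b : PowerSeries (LaurentR r)) (bs : Fin r → PowerSeries (LaurentR r))

noncomputable def normalizingMap (p : ℚ⟦X⟧ × (Fin r → ℚ⟦X⟧)) : ℚ⟦X⟧ × (Fin r → ℚ⟦X⟧) :=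
  (-evalE p.1 p.2 b, fun j => -evalE p.1 p.2 (bs j))

theorem isFixedPt_normalizingMap_iff {p : ℚ⟦X⟧ × (Fin r → ℚ⟦X⟧)} :
    IsFixedPt (normalizingMap b bs) p ↔
      p.1 = -evalE p.1 p.2 b ∧ ∀ j, p.2 j = -evalE p.1 p.2 (bs j) := by
  simp only [IsFixedPt, normalizingMap, Prod.ext_iff, funext_iff, eq_comm]

variable {b bs}

theorem normalizingMap_contracting (hb : constantCoeff b = 0)
    (hbs : ∀ j, constantCoeff (bs j) = 0) (n : ℕ) (p q : ℚ⟦X⟧ × (Fin r → ℚ⟦X⟧))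
    (h : ∀ t < n, coeffsEquiv ℚ (Fin r) p t = coeffsEquiv ℚ (Fin r) q t) :
    ∀ t < n + 1, coeffsEquiv ℚ (Fin r) (normalizingMap b bs p) t =
      coeffsEquiv ℚ (Fin r) (normalizingMap b bs q) t := by
  obtain ⟨h₁, h₂⟩ := coeffsEquiv_agree_iff.1 h
  refine coeffsEquiv_agree_iff.2 ⟨?_, fun j => ?_⟩ <;> simp only [normalizingMap, map_neg]
  · rw [evalE_congr hb h₁ h₂]
  · rw [evalE_congr (hbs j) h₁ h₂]

end Normalization

/-- For `b, b₁, …, b_r ∈ R[[q]]` with zero constant terms there exist unique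
`φ, φ₁, …, φ_r ∈ ℚ[[q]]` with zero constant terms such that
`φ = −E(b)` and `φ_j = −E(b_j)`, where `E = E_{φ,φ₁,…,φ_r}`.  Equivalently,
there is a unique substitution `q ↦ q·exp(φ)`, `q_j ↦ exp(φ_j)` transforming
`Q·exp(B)` into `q^{[δE|]}`. -/
theorem unique_normalizing_substitution (r : ℕ)
    (b : PowerSeries (LaurentR r)) (bs : Fin r → PowerSeries (LaurentR r))
    (hb : PowerSeries.constantCoeff b = 0)
    (hbs : ∀ j, PowerSeries.constantCoeff (bs j) = 0) :
    ∃! p : PowerSeries ℚ × (Fin r → PowerSeries ℚ),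
      (PowerSeries.constantCoeff p.1 = 0 ∧
        ∀ j, PowerSeries.constantCoeff (p.2 j) = 0) ∧
      p.1 = -evalE p.1 p.2 b ∧
      (∀ j, p.2 j = -evalE p.1 p.2 (bs j)) := by
  obtain ⟨p, hp, hp_unique⟩ := Function.existsUnique_isFixedPt_of_contracting
    (coeffsEquiv ℚ (Fin r)) (normalizingMap_contracting hb hbs)
  rw [isFixedPt_normalizingMap_iff] at hp
  refine ⟨p, ⟨⟨?_, fun j => ?_⟩, hp⟩,
    fun q hq => hp_unique q ((isFixedPt_normalizingMap_iff b bs).2 hq.2)⟩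
  · rw [hp.1, map_neg, constantCoeff_evalE hb, neg_zero]
  · rw [hp.2 j, map_neg, constantCoeff_evalE (hbs j), neg_zero]
end

section
/- Let z be a class of admissible type, with associated derivation ∂_z. Then every f₀ ∈ ℚ[H₀] has a unique extension f ∈ f₀ + Λ_{≥1} satisfying ∂_z f = 0. Moreover this extension operation preserves degrees: if f₀ is homogeneous of degree i (f₀ ∈ Λ^i), then so is f. -/
namespace Nov

/-- The lattice `H = ℤ^{r+2}`. -/
abbrev H (r : ℕ) : Type := Fin (r + 2) → ℤ

/-- The delta function `q^{A₀}` at `A₀ ∈ H`. -/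
noncomputable def delta {r : ℕ} (A₀ : H r) : H r → ℚ :=
  fun A => if A = A₀ then 1 else 0

/-- The unit element `q^0` of the Novikov ring. -/
noncomputable def one (r : ℕ) : H r → ℚ := delta (0 : H r)

/-- The convolution product `(x·y)(A) = ∑_{A₁+A₂=A} x(A₁)·y(A₂)`. -/
noncomputable def mul {r : ℕ} (x y : H r → ℚ) : H r → ℚ :=
  fun A => ∑ᶠ B : H r, x B * y (A - B)

/-- The degree-2 derivation `(∂_z x)(A) = ∑_{A₁+A₂=A} z_{A₁}(A₂)·x(A₂)`
associated to a family `z` of additive maps `H → ℚ`. -/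
noncomputable def dz {r : ℕ} (z : H r → (H r →+ ℚ)) (x : H r → ℚ) : H r → ℚ :=
  fun A => ∑ᶠ B : H r, z (A - B) B * x B

/-- The `ν`-finiteness condition: for every `C`, only finitely many support
elements `A` with `ν(A) ≤ C`. -/
def NuFinite {r : ℕ} (ν : H r →+ ℤ) (x : H r → ℚ) : Prop :=
  ∀ C : ℤ, {A : H r | x A ≠ 0 ∧ ν A ≤ C}.Finite

/-- Membership in the homogeneous piece `Λ^i`: support in `{2μ = i}` plus
`ν`-finiteness. -/
def MemHom {r : ℕ} (μ ν : H r →+ ℤ) (i : ℤ) (x : H r → ℚ) : Prop :=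
  (∀ A, x A ≠ 0 → 2 * μ A = i) ∧ NuFinite ν x

/-- Membership in `Λ = ⊕_i Λ^i`: `ν`-finiteness plus finitely many occurring
degrees. -/
def MemLambda {r : ℕ} (μ ν : H r →+ ℤ) (x : H r → ℚ) : Prop :=
  NuFinite ν x ∧ ({i : ℤ | ∃ A, x A ≠ 0 ∧ 2 * μ A = i}).Finite

/-- Support contained in `{ν ≥ k}` (membership in `Λ_{≥k}`, for elements of
`Λ`). -/
def MemGE {r : ℕ} (ν : H r →+ ℤ) (k : ℤ) (x : H r → ℚ) : Prop :=
  ∀ A, x A ≠ 0 → k ≤ ν A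

/-- A class `z` of admissible type: supported on `{μ = 1}`, `ν`-finite, equal
to `ν` at `A_*`, and vanishing on all `A₁ ≠ A_*` with `ν(A₁) < 0`. -/
structure Admissible {r : ℕ} (μ ν : H r →+ ℤ) (Astar : H r)
    (z : H r → (H r →+ ℚ)) : Prop where
  supp_mu : ∀ A₁, z A₁ ≠ 0 → μ A₁ = 1
  nu_fin : ∀ C : ℤ, {A₁ : H r | z A₁ ≠ 0 ∧ ν A₁ ≤ C}.Finite
  at_star : ∀ A, z Astar A = (ν A : ℚ)
  vanish_neg : ∀ A₁, A₁ ≠ Astar → ν A₁ < 0 → z A₁ = 0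

open scoped Classical in
/-- The (two-sided) inverse of `x` within `Λ`, chosen if it exists. -/
noncomputable def invN {r : ℕ} (μ ν : H r →+ ℤ) (x : H r → ℚ) : H r → ℚ :=
  if h : ∃ y, MemLambda μ ν y ∧ mul x y = one r ∧ mul y x = one r then
    h.choose
  else 0

/-- The Schwarzian
`S_z f = ∂_z(∂_z∂_z f·(∂_z f)⁻¹) − (1/2)·(∂_z∂_z f·(∂_z f)⁻¹)²`. -/
noncomputable def Sz {r : ℕ} (μ ν : H r →+ ℤ) (z : H r → (H r →+ ℚ))
    (f : H r → ℚ) : H r → ℚ :=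
  dz z (mul (dz z (dz z f)) (invN μ ν (dz z f)))
    - (1 / 2 : ℚ) •
        mul (mul (dz z (dz z f)) (invN μ ν (dz z f)))
          (mul (dz z (dz z f)) (invN μ ν (dz z f)))

end Nov

/-!
Since `z_{A_*} = ν`, the equation `(∂_z f)(A + A_*) = 0` reads
`ν(A) f(A) = -∑_{A₁ ≠ A_*} z_{A₁}(A + A_* - A₁) f(A + A_* - A₁)`, and admissibility forces
`ν(A₁) ≥ 0` for the `A₁` that occur, so the right-hand side only involves values of `f` at
strictly smaller `ν`. For `ν(A) ≥ 1` this determines `f(A)` recursively from `f₀`, giving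
existence and uniqueness. As `μ(A₁) = μ(A_*) = 1`, the recursion stays on one level of `μ`, which
gives the degree statement, and the `ν`-finiteness of `z` propagates `ν`-finiteness from one level
to the next.
-/

namespace Nov

theorem induction_on_level {α : Type*} (f : α → ℤ) {P : α → Prop}
    (base : ∀ a, f a ≤ 0 → P a)
    (step : ∀ a, 0 < f a → (∀ b, f b < f a → P b) → P a) (a : α) : P a := by
  induction a using (measure fun a => (f a).toNat).wf.induction with
  | _ a ih =>
    by_cases ha : f a ≤ 0
    · exact base a ha
    · exact step a (by omega) fun b hb => ih b (show (f b).toNat < (f a).toNat by omega)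

variable {r : ℕ} {μ ν : H r →+ ℤ} {Astar : H r} {z : H r → (H r →+ ℚ)}

theorem NuFinite.mono {x y : H r → ℚ} (hx : NuFinite ν x) (h : ∀ A, y A ≠ 0 → x A ≠ 0) :
    NuFinite ν y :=
  fun C => (hx C).subset fun A hA => ⟨h A hA.1, hA.2⟩

theorem MemLambda.mono {x y : H r → ℚ} (hx : MemLambda μ ν x)
    (h : ∀ A, y A ≠ 0 → x A ≠ 0) : MemLambda μ ν y :=
  ⟨hx.1.mono h, hx.2.subset fun _ ⟨A, hA, hi⟩ => ⟨A, h A hA, hi⟩⟩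

theorem nu_add_star_sub (hνA : ν Astar = -1) (A A₁ : H r) :
    ν (A + Astar - A₁) = ν A - 1 - ν A₁ := by
  rw [map_sub, map_add, hνA]; ring

namespace Admissible

variable (hz : Admissible μ ν Astar z)

noncomputable def lowSupport (k : ℤ) : Finset (H r) :=
  (hz.nu_fin k).toFinset.erase Astar

theorem mem_lowSupport {k : ℤ} {A₁ : H r} :
    A₁ ∈ hz.lowSupport k ↔ A₁ ≠ Astar ∧ z A₁ ≠ 0 ∧ ν A₁ ≤ k := by
  simp [lowSupport]

theorem nu_nonneg_of_mem_lowSupport {k : ℤ} {A₁ : H r} (h : A₁ ∈ hz.lowSupport k) :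
    0 ≤ ν A₁ := by
  obtain ⟨hne, hz0, -⟩ := hz.mem_lowSupport.1 h
  by_contra hlt
  exact hz0 (hz.vanish_neg A₁ hne (by omega))

theorem nu_add_star_sub_lt (hνA : ν Astar = -1) {A A₁ : H r}
    (h : A₁ ∈ hz.lowSupport (ν A - 1)) : ν (A + Astar - A₁) < ν A := by
  have := hz.nu_nonneg_of_mem_lowSupport h
  rw [nu_add_star_sub hνA]; omega

theorem mu_add_star_sub (hμA : μ Astar = 1) {k : ℤ} {A A₁ : H r}
    (h : A₁ ∈ hz.lowSupport k) : μ (A + Astar - A₁) = μ A := by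
  have hz0 := (hz.mem_lowSupport.1 h).2.1
  rw [map_sub, map_add, hμA, hz.supp_mu A₁ hz0, add_sub_cancel_right]

/-- The part of `(∂_z x)(A + A_*)` contributed by the `z_{A₁}` with `A₁ ≠ A_*`. -/
noncomputable def corr (x : H r → ℚ) (A : H r) : ℚ :=
  ∑ A₁ ∈ hz.lowSupport (ν A - 1), z A₁ (A + Astar - A₁) * x (A + Astar - A₁)

theorem dz_add_star (hνA : ν Astar = -1) {x : H r → ℚ} (hx : ∀ A, x A ≠ 0 → 0 ≤ ν A)
    (A : H r) : dz z x (A + Astar) = ν A * x A + hz.corr x A := by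
  classical
  have hsupp : Function.support (fun B => z (A + Astar - B) B * x B) ⊆
      ↑(insert A ((hz.lowSupport (ν A - 1)).image fun A₁ => A + Astar - A₁)) := by
    intro B hB
    rw [Finset.mem_coe]
    -- either `A + A_* - B = A_*`, or admissibility gives `0 ≤ ν (A + A_* - B) ≤ ν A - 1`
    obtain ⟨hzB, hxB⟩ := mul_ne_zero_iff.1 hB
    have hzB' : z (A + Astar - B) ≠ 0 := fun h => hzB (by rw [h, AddMonoidHom.zero_apply])
    by_cases hstar : A + Astar - B = Astar
    · rw [sub_eq_iff_eq_add, add_comm Astar, add_left_inj] at hstar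
      exact Finset.mem_insert.2 (Or.inl hstar.symm)
    · have hnonneg : 0 ≤ ν (A + Astar - B) :=
        not_lt.1 fun hlt => hzB' (hz.vanish_neg _ hstar hlt)
      have hlevel := nu_add_star_sub hνA A B
      have hB0 := hx B hxB
      refine Finset.mem_insert_of_mem
        (Finset.mem_image.2 ⟨A + Astar - B, hz.mem_lowSupport.2 ⟨hstar, hzB', ?_⟩, ?_⟩)
      · omega
      · exact sub_sub_cancel _ _
  have hnotmem : A ∉ (hz.lowSupport (ν A - 1)).image fun A₁ => A + Astar - A₁ := by
    rintro hA
    obtain ⟨A₁, hA₁, heq⟩ := Finset.mem_image.1 hA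
    rw [sub_eq_iff_eq_add, add_right_inj] at heq
    exact (hz.mem_lowSupport.1 hA₁).1 heq.symm
  rw [dz, finsum_eq_sum_of_support_subset _ hsupp, Finset.sum_insert hnotmem,
    Finset.sum_image fun _ _ _ _ h => sub_right_injective h, add_sub_cancel_left, hz.at_star]
  simp only [corr, sub_sub_cancel]

def SatisfiesRecursion (x : H r → ℚ) : Prop :=
  ∀ A, (ν A : ℚ) * x A + hz.corr x A = 0

theorem dz_eq_zero_iff (hνA : ν Astar = -1) {x : H r → ℚ} (hx : ∀ A, x A ≠ 0 → 0 ≤ ν A) :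
    dz z x = 0 ↔ hz.SatisfiesRecursion x := by
  refine ⟨fun h A => ?_, fun h => funext fun A => ?_⟩
  · rw [← hz.dz_add_star hνA hx, h, Pi.zero_apply]
  · rw [← sub_add_cancel A Astar, hz.dz_add_star hνA hx, h, Pi.zero_apply]

theorem corr_congr (hνA : ν Astar = -1) {x y : H r → ℚ} {A : H r}
    (h : ∀ B, ν B < ν A → x B = y B) : hz.corr x A = hz.corr y A :=
  Finset.sum_congr rfl fun _ hA₁ => by rw [h _ (hz.nu_add_star_sub_lt hνA hA₁)]

theorem exists_lower_ne_zero {x : H r → ℚ} (hx : hz.SatisfiesRecursion x) {A : H r}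
    (hA : x A ≠ 0) (hpos : 0 < ν A) :
    ∃ A₁ ∈ hz.lowSupport (ν A - 1), x (A + Astar - A₁) ≠ 0 := by
  have hcorr : hz.corr x A ≠ 0 := by
    rw [← neg_ne_zero, ← eq_neg_of_add_eq_zero_left (hx A)]
    exact mul_ne_zero (by exact_mod_cast hpos.ne') hA
  obtain ⟨A₁, hA₁, hterm⟩ := Finset.exists_ne_zero_of_sum_ne_zero hcorr
  exact ⟨A₁, hA₁, right_ne_zero_of_mul hterm⟩

theorem eq_of_satisfiesRecursion (hνA : ν Astar = -1) {x y : H r → ℚ}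
    (hx : hz.SatisfiesRecursion x) (hy : hz.SatisfiesRecursion y)
    (hlow : ∀ A, ν A ≤ 0 → x A = y A) : x = y := by
  funext A
  induction A using induction_on_level ν with
  | base A hA => exact hlow A hA
  | step A hpos ih =>
    have hν : (ν A : ℚ) ≠ 0 := by exact_mod_cast hpos.ne'
    refine mul_left_cancel₀ hν ?_
    rw [eq_neg_of_add_eq_zero_left (hx A), eq_neg_of_add_eq_zero_left (hy A),
      hz.corr_congr hνA ih]

theorem exists_low_of_ne_zero (hμA : μ Astar = 1) (hνA : ν Astar = -1) {x : H r → ℚ}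
    (hx : hz.SatisfiesRecursion x) {A : H r} (hA : x A ≠ 0) :
    ∃ B, ν B ≤ 0 ∧ x B ≠ 0 ∧ μ B = μ A := by
  induction A using induction_on_level ν with
  | base A hle => exact ⟨A, hle, hA, rfl⟩
  | step A hpos ih =>
    obtain ⟨A₁, hA₁, hne⟩ := hz.exists_lower_ne_zero hx hA hpos
    obtain ⟨B, hB, hxB, hμB⟩ := ih _ (hz.nu_add_star_sub_lt hνA hA₁) hne
    exact ⟨B, hB, hxB, hμB.trans (hz.mu_add_star_sub hμA hA₁)⟩

theorem nuFinite_of_satisfiesRecursion (hνA : ν Astar = -1) {x : H r → ℚ}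
    (hx : hz.SatisfiesRecursion x) (hlow : {A | x A ≠ 0 ∧ ν A ≤ 0}.Finite) :
    NuFinite ν x := by
  suffices h : ∀ n : ℕ, {A | x A ≠ 0 ∧ ν A ≤ n}.Finite from
    fun C => (h C.toNat).subset fun A hA => ⟨hA.1, by have := hA.2; omega⟩
  intro n
  induction n with
  | zero => simpa using hlow
  | succ n ih =>
    refine (ih.union (((hz.lowSupport n).finite_toSet.prod ih).image
      fun p => p.2 + p.1 - Astar)).subset ?_
    rintro A ⟨hA, hle⟩
    by_cases hA_le : ν A ≤ n
    · exact Or.inl ⟨hA, hA_le⟩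
    · obtain ⟨A₁, hA₁, hne⟩ := hz.exists_lower_ne_zero hx hA (by omega)
      have hlevel := hz.nu_add_star_sub_lt hνA hA₁
      have hn : ν A - 1 = n := by push_cast at hle; omega
      rw [hn] at hA₁
      refine Or.inr ⟨(A₁, A + Astar - A₁), ⟨hA₁, hne, ?_⟩, by simp⟩
      show ν (A + Astar - A₁) ≤ n
      omega

noncomputable def extension (hνA : ν Astar = -1) (f₀ : H r → ℚ) (A : H r) : ℚ :=
  if _ : 1 ≤ ν A then
    -(∑ A₁ ∈ (hz.lowSupport (ν A - 1)).attach,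
        z A₁ (A + Astar - A₁) * extension hνA f₀ (A + Astar - A₁)) / ν A
  else f₀ A
termination_by (ν A).toNat
decreasing_by have := hz.nu_add_star_sub_lt hνA A₁.2; omega

theorem extension_eq (hνA : ν Astar = -1) (f₀ : H r → ℚ) (A : H r) :
    hz.extension hνA f₀ A =
      if 1 ≤ ν A then -hz.corr (hz.extension hνA f₀) A / ν A else f₀ A := by
  rw [extension]
  split_ifs
  · rw [Finset.sum_attach (hz.lowSupport (ν A - 1))
      fun A₁ => z A₁ (A + Astar - A₁) * hz.extension hνA f₀ (A + Astar - A₁), corr]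
  · rfl

theorem extension_of_nonpos (hνA : ν Astar = -1) (f₀ : H r → ℚ) {A : H r} (hA : ν A ≤ 0) :
    hz.extension hνA f₀ A = f₀ A := by
  rw [extension_eq, if_neg (by omega)]

theorem satisfiesRecursion_extension (hνA : ν Astar = -1) {f₀ : H r → ℚ}
    (hker : ∀ A, f₀ A ≠ 0 → ν A = 0) : hz.SatisfiesRecursion (hz.extension hνA f₀) := by
  intro A
  by_cases hpos : 1 ≤ ν A
  · have hν : (ν A : ℚ) ≠ 0 := by exact_mod_cast (by omega : ν A ≠ 0)
    rw [extension_eq, if_pos hpos]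
    field_simp
    ring
  · have hcorr : hz.corr (hz.extension hνA f₀) A = 0 := by
      refine Finset.sum_eq_zero fun A₁ hA₁ => ?_
      have := hz.nu_nonneg_of_mem_lowSupport hA₁
      have := (hz.mem_lowSupport.1 hA₁).2.2
      omega
    rw [hcorr, add_zero, extension_of_nonpos _ _ _ (by omega)]
    by_cases h0 : f₀ A = 0
    · rw [h0, mul_zero]
    · rw [hker A h0, Int.cast_zero, zero_mul]

section Extension

variable (hνA : ν Astar = -1) {f₀ : H r → ℚ}

theorem nu_nonneg_of_extension_ne_zero (hker : ∀ A, f₀ A ≠ 0 → ν A = 0) {A : H r}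
    (hA : hz.extension hνA f₀ A ≠ 0) : 0 ≤ ν A := by
  by_contra hneg
  rw [hz.extension_of_nonpos hνA f₀ (by omega)] at hA
  have := hker A hA
  omega

theorem add_eq_extension_iff (hker : ∀ A, f₀ A ≠ 0 → ν A = 0)
    {g : H r → ℚ} (hg : MemGE ν 1 g) :
    dz z (f₀ + g) = 0 ↔ f₀ + g = hz.extension hνA f₀ := by
  have hg_low : ∀ A, ν A ≤ 0 → g A = 0 := fun A hA => by
    by_contra h
    have := hg A h
    omega
  refine ⟨fun hdz => ?_, fun h => ?_⟩
  · have hsupp : ∀ A, (f₀ + g) A ≠ 0 → 0 ≤ ν A := fun A hA => by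
      by_cases hνA' : ν A ≤ 0
      · rw [Pi.add_apply, hg_low A hνA', add_zero] at hA
        exact (hker A hA).ge
      · omega
    refine hz.eq_of_satisfiesRecursion hνA ((hz.dz_eq_zero_iff hνA hsupp).1 hdz)
      (hz.satisfiesRecursion_extension hνA hker) fun A hA => ?_
    rw [Pi.add_apply, hg_low A hA, add_zero, hz.extension_of_nonpos hνA f₀ hA]
  · rw [h, hz.dz_eq_zero_iff hνA (fun _ => hz.nu_nonneg_of_extension_ne_zero hνA hker)]
    exact hz.satisfiesRecursion_extension hνA hker

theorem exists_support_of_extension_ne_zero (hker : ∀ A, f₀ A ≠ 0 → ν A = 0)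
    (hμA : μ Astar = 1) {A : H r} (hA : hz.extension hνA f₀ A ≠ 0) :
    ∃ B, f₀ B ≠ 0 ∧ μ B = μ A := by
  obtain ⟨B, hB, hne, hμB⟩ :=
    hz.exists_low_of_ne_zero hμA hνA (hz.satisfiesRecursion_extension hνA hker) hA
  exact ⟨B, by rwa [hz.extension_of_nonpos hνA f₀ hB] at hne, hμB⟩

theorem nuFinite_extension (hker : ∀ A, f₀ A ≠ 0 → ν A = 0)
    (hfin : (Function.support f₀).Finite) :
    NuFinite ν (hz.extension hνA f₀) :=
  hz.nuFinite_of_satisfiesRecursion hνA (hz.satisfiesRecursion_extension hνA hker) <|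
    hfin.subset fun A ⟨hA, hle⟩ => by rwa [hz.extension_of_nonpos hνA f₀ hle] at hA

theorem memLambda_extension (hker : ∀ A, f₀ A ≠ 0 → ν A = 0)
    (hμA : μ Astar = 1) (hfin : (Function.support f₀).Finite) :
    MemLambda μ ν (hz.extension hνA f₀) := by
  refine ⟨hz.nuFinite_extension hνA hker hfin,
    (hfin.image fun B => 2 * μ B).subset ?_⟩
  rintro _ ⟨A, hA, rfl⟩
  obtain ⟨B, hB, hμB⟩ := hz.exists_support_of_extension_ne_zero hνA hker hμA hA
  exact ⟨B, hB, congrArg (2 * ·) hμB⟩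

theorem memHom_extension (hker : ∀ A, f₀ A ≠ 0 → ν A = 0)
    (hμA : μ Astar = 1) (hfin : (Function.support f₀).Finite) {i : ℤ}
    (hi : ∀ A, f₀ A ≠ 0 → 2 * μ A = i) : MemHom μ ν i (hz.extension hνA f₀) := by
  refine ⟨fun A hA => ?_, hz.nuFinite_extension hνA hker hfin⟩
  obtain ⟨B, hB, hμB⟩ := hz.exists_support_of_extension_ne_zero hνA hker hμA hA
  rw [← hμB, hi B hB]

theorem ne_zero_of_extension_sub_ne_zero (hker : ∀ A, f₀ A ≠ 0 → ν A = 0) {A : H r}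
    (hA : (hz.extension hνA f₀ - f₀) A ≠ 0) : 1 ≤ ν A ∧ hz.extension hνA f₀ A ≠ 0 := by
  have hpos : 1 ≤ ν A := by
    by_contra hle
    rw [Pi.sub_apply, hz.extension_of_nonpos hνA f₀ (by omega), sub_self] at hA
    exact hA rfl
  refine ⟨hpos, ?_⟩
  have hf₀ : f₀ A = 0 := by
    by_contra h0
    have := hker A h0
    omega
  rwa [Pi.sub_apply, hf₀, sub_zero] at hA

end Extension

end Admissible

end Nov

open Nov in
/-- Any `f₀ ∈ ℚ[H₀]` has a unique extension `f ∈ f₀ + Λ_{≥1}` with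
`∂_z f = 0`; moreover the extension preserves degrees: if `f₀` is homogeneous
of degree `i` then so is the extension. -/
theorem unique_dz_constant_extension (r : ℕ) (μ ν : H r →+ ℤ) (Astar : H r)
    (hμA : μ Astar = 1) (hνA : ν Astar = -1)
    (z : H r → (H r →+ ℚ)) (hz : Admissible μ ν Astar z)
    (f₀ : H r → ℚ) (hfin : (Function.support f₀).Finite)
    (hker : ∀ A, f₀ A ≠ 0 → ν A = 0) :
    (∃! g : H r → ℚ,
        MemLambda μ ν g ∧ MemGE ν 1 g ∧ dz z (f₀ + g) = 0) ∧
    (∀ i : ℤ, (∀ A, f₀ A ≠ 0 → 2 * μ A = i) →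
        ∀ g : H r → ℚ, MemLambda μ ν g → MemGE ν 1 g → dz z (f₀ + g) = 0 →
          MemHom μ ν i (f₀ + g)) := by
  let f := hz.extension hνA f₀
  have hdiff : ∀ A, (f - f₀) A ≠ 0 → 1 ≤ ν A ∧ f A ≠ 0 :=
    fun A => hz.ne_zero_of_extension_sub_ne_zero hνA hker
  have hge : MemGE ν 1 (f - f₀) := fun A hA => (hdiff A hA).1
  refine ⟨⟨f - f₀, ⟨?_, hge, ?_⟩, fun g ⟨_, hg, hdz⟩ => ?_⟩, ?_⟩
  · exact (hz.memLambda_extension hνA hker hμA hfin).mono fun A hA => (hdiff A hA).2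
  · exact (hz.add_eq_extension_iff hνA hker hge).2 (add_sub_cancel f₀ f)
  · exact eq_sub_of_add_eq' ((hz.add_eq_extension_iff hνA hker hg).1 hdz)
  · intro i hi g _ hg hdz
    rw [(hz.add_eq_extension_iff hνA hker hg).1 hdz]
    exact hz.memHom_extension hνA hker hμA hfin hi
end

section
/- Let z be a class of admissible type, with associated derivation ∂_z. Then for every k ∈ ℤ and every f ∈ Λ_{≥k}, one has ∂_z f − k·q^{A_*}·f ∈ Λ_{≥k}, where q^{A_*} ∈ Λ is the delta function at A_* and the product is taken in Λ. In particular (the case k = 0), ∂_z maps Λ^i_{≥0} into Λ^{i+2}_{≥0}. -/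
namespace Nov

open Function Set
open scoped Pointwise

variable {r : ℕ} {μ ν : H r →+ ℤ} {Astar : H r} {z : H r → (H r →+ ℚ)}

def NuFiniteSet (ν : H r →+ ℤ) (S : Set (H r)) : Prop :=
  ∀ C : ℤ, {A ∈ S | ν A ≤ C}.Finite

def degree (μ : H r →+ ℤ) (A : H r) : ℤ := 2 * μ A

/-- The condition on supports defining `Λ`: `MemLambda μ ν x` unfolds to
`LambdaSet μ ν (support x)`. -/
def LambdaSet (μ ν : H r →+ ℤ) (S : Set (H r)) : Prop :=
  NuFiniteSet ν S ∧ (degree μ '' S).Finite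

section Sets

variable {S T : Set (H r)}

theorem NuFiniteSet.mono (hS : NuFiniteSet ν S) (hTS : T ⊆ S) : NuFiniteSet ν T :=
  fun C => (hS C).subset fun _ hA => ⟨hTS hA.1, hA.2⟩

theorem NuFiniteSet.exists_le (hS : NuFiniteSet ν S) : ∃ m, ∀ A ∈ S, m ≤ ν A := by
  obtain ⟨m, hm⟩ := ((hS 0).image ν).bddBelow
  refine ⟨min m 0, fun A hA => ?_⟩
  by_cases hA0 : ν A ≤ 0
  · exact min_le_of_left_le (hm ⟨A, ⟨hA, hA0⟩, rfl⟩)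
  · exact min_le_of_right_le (by omega)

theorem NuFiniteSet.add (hS : NuFiniteSet ν S) (hT : NuFiniteSet ν T) :
    NuFiniteSet ν (S + T) := by
  obtain ⟨a, ha⟩ := hS.exists_le
  obtain ⟨b, hb⟩ := hT.exists_le
  intro C
  refine ((hS (C - b)).add (hT (C - a))).subset ?_
  rintro _ ⟨⟨A, hA, B, hB, rfl⟩, hC⟩
  have := ha A hA
  have := hb B hB
  rw [map_add] at hC
  exact ⟨A, ⟨hA, by omega⟩, B, ⟨hB, by omega⟩, rfl⟩

theorem image_degree_add (μ : H r →+ ℤ) (S T : Set (H r)) :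
    degree μ '' (S + T) = degree μ '' S + degree μ '' T :=
  image_image2_distrib fun A B => by simp only [degree, map_add, mul_add]

theorem LambdaSet.mono (hS : LambdaSet μ ν S) (hTS : T ⊆ S) : LambdaSet μ ν T :=
  ⟨hS.1.mono hTS, hS.2.subset (image_mono hTS)⟩

theorem LambdaSet.union (hS : LambdaSet μ ν S) (hT : LambdaSet μ ν T) :
    LambdaSet μ ν (S ∪ T) := by
  refine ⟨fun C => ((hS.1 C).union (hT.1 C)).subset ?_, ?_⟩
  · rintro A ⟨hA | hA, hC⟩
    exacts [Or.inl ⟨hA, hC⟩, Or.inr ⟨hA, hC⟩]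
  · rw [image_union]
    exact hS.2.union hT.2

theorem LambdaSet.add (hS : LambdaSet μ ν S) (hT : LambdaSet μ ν T) :
    LambdaSet μ ν (S + T) :=
  ⟨hS.1.add hT.1, by rw [image_degree_add]; exact hS.2.add hT.2⟩

theorem lambdaSet_singleton (A₀ : H r) : LambdaSet μ ν {A₀} :=
  ⟨fun _ => (finite_singleton A₀).subset fun _ hA => hA.1, (finite_singleton A₀).image _⟩

end Sets

section Lambda

variable {x y : H r → ℚ}

theorem MemLambda.sub (hx : MemLambda μ ν x) (hy : MemLambda μ ν y) :
    MemLambda μ ν (x - y) :=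
  (LambdaSet.union hx hy).mono (support_sub x y)

theorem MemLambda.const_smul (hx : MemLambda μ ν x) (c : ℚ) : MemLambda μ ν (c • x) :=
  LambdaSet.mono hx (support_const_smul_subset c x)

end Lambda

theorem mul_delta_apply (A₀ : H r) (f : H r → ℚ) (A : H r) :
    mul (delta A₀) f A = f (A - A₀) := by
  rw [mul, finsum_eq_single _ A₀ fun B hB => by simp [delta, hB]]
  simp [delta]

theorem support_mul_delta (A₀ : H r) (f : H r → ℚ) :
    support (mul (delta A₀) f) ⊆ support f + {A₀} := by
  intro A hA
  rw [mem_support, mul_delta_apply] at hA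
  exact ⟨A - A₀, hA, A₀, rfl, sub_add_cancel A A₀⟩

theorem memLambda_mul_delta (A₀ : H r) {f : H r → ℚ} (hf : MemLambda μ ν f) :
    MemLambda μ ν (mul (delta A₀) f) :=
  (LambdaSet.add hf (lambdaSet_singleton A₀)).mono (support_mul_delta A₀ f)

theorem support_dz (z : H r → (H r →+ ℚ)) (f : H r → ℚ) :
    support (dz z f) ⊆ {A₁ | z A₁ ≠ 0} + support f := by
  intro A hA
  obtain ⟨B, hB⟩ : ∃ B, z (A - B) B * f B ≠ 0 := by
    by_contra! h
    exact hA (finsum_eq_zero_of_forall_eq_zero h)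
  exact ⟨A - B, fun h => hB (by simp [h]), B, right_ne_zero_of_mul hB, sub_add_cancel A B⟩

namespace Admissible

variable {f : H r → ℚ} {k : ℤ}

theorem lambdaSet (hz : Admissible μ ν Astar z) : LambdaSet μ ν {A₁ | z A₁ ≠ 0} :=
  ⟨hz.nu_fin, (finite_singleton 2).subset <| image_subset_iff.2 fun A₁ h => by
    simp [degree, hz.supp_mu A₁ h]⟩

theorem memLambda_dz (hz : Admissible μ ν Astar z) (hf : MemLambda μ ν f) :
    MemLambda μ ν (dz z f) :=
  (hz.lambdaSet.add hf).mono (support_dz z f)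

theorem memHom_dz (hz : Admissible μ ν Astar z) {i : ℤ} {x : H r → ℚ}
    (hx : MemHom μ ν i x) : MemHom μ ν (i + 2) (dz z x) := by
  refine ⟨fun A hA => ?_, (hz.lambdaSet.1.add hx.2).mono (support_dz z x)⟩
  obtain ⟨A₁, hA₁, B, hB, rfl⟩ := support_dz z x hA
  rw [map_add, mul_add, hz.supp_mu A₁ hA₁, hx.1 B hB]
  ring

theorem dz_apply_of_nu_lt (hνA : ν Astar = -1) (hz : Admissible μ ν Astar z)
    (hge : MemGE ν k f) {A : H r} (hA : ν A < k) :
    dz z f A = (ν A + 1 : ℚ) * f (A - Astar) := by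
  rw [dz, finsum_eq_single _ (A - Astar)]
  · rw [sub_sub_cancel, hz.at_star, map_sub, hνA]
    push_cast
    ring
  · intro B hB
    by_cases hfB : f B = 0
    · simp [hfB]
    have hν := hge B hfB
    have hzero : z (A - B) = 0 :=
      hz.vanish_neg _ (fun h => hB (by rw [← h, sub_sub_cancel]))
        (by rw [map_sub]; omega)
    simp [hzero]

theorem memGE_dz_sub (hνA : ν Astar = -1) (hz : Admissible μ ν Astar z)
    (hge : MemGE ν k f) : MemGE ν k (dz z f - (k : ℚ) • mul (delta Astar) f) := by
  intro A hA
  by_contra! hlt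
  apply hA
  rw [Pi.sub_apply, Pi.smul_apply, smul_eq_mul, hz.dz_apply_of_nu_lt hνA hge hlt,
    mul_delta_apply]
  by_cases hf0 : f (A - Astar) = 0
  · simp [hf0]
  have hν := hge _ hf0
  rw [map_sub, hνA] at hν
  obtain rfl : k = ν A + 1 := by omega
  push_cast
  ring

end Admissible

end Nov

open Nov in
theorem dz_shift_in_lambda_ge_general (r : ℕ) (μ ν : H r →+ ℤ) (Astar : H r)
    (hνA : ν Astar = -1)
    (z : H r → (H r →+ ℚ)) (hz : Admissible μ ν Astar z)
    (k : ℤ) (f : H r → ℚ)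
    (hf : MemLambda μ ν f) (hge : MemGE ν k f) :
    (MemLambda μ ν (dz z f - (k : ℚ) • mul (delta Astar) f) ∧
      MemGE ν k (dz z f - (k : ℚ) • mul (delta Astar) f)) ∧
    (∀ (i : ℤ) (x : H r → ℚ), MemHom μ ν i x → MemGE ν 0 x →
        MemHom μ ν (i + 2) (dz z x) ∧ MemGE ν 0 (dz z x)) := by
  refine ⟨⟨(hz.memLambda_dz hf).sub ((memLambda_mul_delta Astar hf).const_smul _),
    hz.memGE_dz_sub hνA hge⟩, fun i x hx hx0 => ⟨hz.memHom_dz hx, ?_⟩⟩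
  simpa using hz.memGE_dz_sub hνA hx0 (k := 0)

open Nov in
/-- For `f ∈ Λ_{≥k}`, one has `∂_z f − k·q^{A_*}·f ∈ Λ_{≥k}`.  In particular
(`k = 0`), `∂_z` maps `Λ^i_{≥0}` into `Λ^{i+2}_{≥0}`. -/
theorem dz_shift_in_lambda_ge (r : ℕ) (μ ν : H r →+ ℤ) (Astar : H r)
    (hμA : μ Astar = 1) (hνA : ν Astar = -1)
    (z : H r → (H r →+ ℚ)) (hz : Admissible μ ν Astar z)
    (k : ℤ) (f : H r → ℚ)
    (hf : MemLambda μ ν f) (hge : MemGE ν k f) :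
    (MemLambda μ ν (dz z f - (k : ℚ) • mul (delta Astar) f) ∧
      MemGE ν k (dz z f - (k : ℚ) • mul (delta Astar) f)) ∧
    (∀ (i : ℤ) (x : H r → ℚ), MemHom μ ν i x → MemGE ν 0 x →
        MemHom μ ν (i + 2) (dz z x) ∧ MemGE ν 0 (dz z x)) :=
  dz_shift_in_lambda_ge_general r μ ν Astar hνA z hz k f hf hge
end

section
/- Let z be a class of admissible type, and let f ∈ Λ^i_{≥1} be homogeneous of even degree i with q^{A_*}·f invertible in Λ_{≥0}. Let k ∈ ℤ, let a ∈ Λ^k_{≥0} be invertible in Λ_{≥0} with ∂_z a = 0, and let b ∈ Λ^{k−i}_{≥0} with ∂_z b = 0. Then a + b·f is invertible, the element f̃ = f·(a + b·f)⁻¹ lies in Λ^{i−k}_{≥1}, q^{A_*}·f̃ is invertible in Λ_{≥0}, and S_z f̃ = S_z f. That is, the Schwarzian S_z is unchanged under the transformations f ↦ f/(a + bf) with ∂_z-constant homogeneous a (invertible) and b. -/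
namespace NovProof
open Nov Function

variable {r : ℕ} {μ ν : H r →+ ℤ}

/-- `NuFinite` support is bounded below in `ν`. -/
lemma nufin_exists_ge {x : H r → ℚ} (hx : NuFinite ν x) : ∃ m, MemGE ν m x := by
  classical
  set s : Finset ℤ := insert 0 (((hx 0).toFinset).image ν) with hs
  refine ⟨s.min' ⟨0, by simp [hs]⟩, fun A hA => ?_⟩
  rcases le_or_gt 0 (ν A) with h | h
  · exact le_trans (Finset.min'_le s 0 (by simp [hs])) h
  · exact Finset.min'_le s (ν A) (by
      simp only [hs, Finset.mem_insert, Finset.mem_image, Set.Finite.mem_toFinset]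
      exact Or.inr ⟨A, ⟨hA, h.le⟩, rfl⟩)

lemma mul_support_subset {x y : H r → ℚ} {m : ℤ} (hy : MemGE ν m y) (A : H r) :
    (support fun B => x B * y (A - B)) ⊆ {B | x B ≠ 0 ∧ ν B ≤ ν A - m} := by
  intro B hB
  have hx : x B ≠ 0 := fun h => hB (by simp [h])
  have hyB : y (A - B) ≠ 0 := fun h => hB (by simp [h])
  have := hy _ hyB
  rw [map_sub] at this
  exact ⟨hx, by omega⟩

lemma mul_support_fin {x y : H r → ℚ} (hx : NuFinite ν x) {m : ℤ} (hy : MemGE ν m y)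
    (A : H r) : (support fun B => x B * y (A - B)).Finite :=
  (hx (ν A - m)).subset (mul_support_subset hy A)

lemma mul_apply_eq_sum {x y : H r → ℚ} {A : H r} {T : Finset (H r)}
    (h : ∀ B, x B ≠ 0 → y (A - B) ≠ 0 → B ∈ T) :
    mul x y A = ∑ B ∈ T, x B * y (A - B) := by
  refine finsum_eq_finset_sum_of_support_subset _ (fun B hB => ?_)
  have hx : x B ≠ 0 := fun h' => hB (by simp [h'])
  have hy : y (A - B) ≠ 0 := fun h' => hB (by simp [h'])
  exact h B hx hy

lemma exists_ne_zero_of_mul_apply_ne_zero {x y : H r → ℚ} {A : H r}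
    (h : mul x y A ≠ 0) : ∃ B, x B ≠ 0 ∧ y (A - B) ≠ 0 := by
  by_contra hc
  push_neg at hc
  have : mul x y A = 0 := by
    have : ∀ B : H r, x B * y (A - B) = 0 := by
      intro B
      by_cases hB : x B = 0
      · simp [hB]
      · simp [hc B hB]
    simp [Nov.mul, this]
  exact h this

lemma nufin_mul {x y : H r → ℚ} (hx : NuFinite ν x) (hy : NuFinite ν y)
    {m₁ m₂ : ℤ} (hx' : MemGE ν m₁ x) (hy' : MemGE ν m₂ y) :
    NuFinite ν (mul x y) := by
  intro C
  refine (Set.Finite.image2 (· + ·) (hx (C - m₂)) (hy (C - m₁))).subset ?_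
  rintro A ⟨hA, hAC⟩
  obtain ⟨B, hB, hB'⟩ := exists_ne_zero_of_mul_apply_ne_zero hA
  have h1 := hx' _ hB
  have h2 := hy' _ hB'
  have h3 : ν (A - B) = ν A - ν B := by rw [map_sub]
  refine ⟨B, ⟨hB, by omega⟩, A - B, ⟨hB', by omega⟩, by show B + (A - B) = A; abel⟩

lemma memGE_mul {x y : H r → ℚ} {m₁ m₂ : ℤ} (hx : MemGE ν m₁ x) (hy : MemGE ν m₂ y) :
    MemGE ν (m₁ + m₂) (mul x y) := by
  intro A hA
  obtain ⟨B, hB, hB'⟩ := exists_ne_zero_of_mul_apply_ne_zero hA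
  have h1 := hx _ hB
  have h2 := hy _ hB'
  rw [map_sub] at h2
  omega

lemma mul_comm' (x y : H r → ℚ) : mul x y = mul y x := by
  funext A
  show ∑ᶠ B, x B * y (A - B) = ∑ᶠ B, y B * x (A - B)
  rw [← finsum_comp_equiv (Equiv.subLeft A) (f := fun B => x B * y (A - B))]
  refine finsum_congr fun B => ?_
  simp [Equiv.subLeft, mul_comm, sub_sub_cancel]

lemma one_mul' (x : H r → ℚ) : mul (one r) x = x := by
  funext A
  show ∑ᶠ B, one r B * x (A - B) = x A
  rw [finsum_eq_single _ (0 : H r) (fun B hB => by simp [Nov.one, Nov.delta, hB])]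
  simp [Nov.one, Nov.delta]

lemma mul_one' (x : H r → ℚ) : mul x (one r) = x := by
  rw [mul_comm', one_mul']

lemma zero_mul' (x : H r → ℚ) : mul 0 x = 0 := by
  funext A; show ∑ᶠ B, (0:ℚ) * x (A - B) = 0; simp

lemma delta_mul_apply (A₀ : H r) (x : H r → ℚ) (A : H r) :
    mul (delta A₀) x A = x (A - A₀) := by
  show ∑ᶠ B, delta A₀ B * x (A - B) = x (A - A₀)
  rw [finsum_eq_single _ A₀ (fun B hB => by simp [Nov.delta, hB])]
  simp [Nov.delta]

lemma smul_one_mul (c : ℚ) (x : H r → ℚ) : mul (c • one r) x = c • x := by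
  funext A
  show ∑ᶠ B, (c • one r) B * x (A - B) = c * x A
  rw [finsum_eq_single _ (0 : H r) (fun B hB => by simp [Nov.one, Nov.delta, hB])]
  simp [Nov.one, Nov.delta]

lemma mul_add' {x y w : H r → ℚ} (hx : NuFinite ν x) {m₁ m₂ m₃ : ℤ}
    (hxg : MemGE ν m₁ x) (hy : MemGE ν m₂ y) (hw : MemGE ν m₃ w) :
    mul x (y + w) = mul x y + mul x w := by
  funext A
  show ∑ᶠ B, x B * (y + w) (A - B) = mul x y A + mul x w A
  have h1 : ∀ B : H r, x B * (y + w) (A - B) = x B * y (A - B) + x B * w (A - B) := by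
    intro B; simp [Pi.add_apply, mul_add]
  rw [finsum_congr h1, finsum_add_distrib (mul_support_fin hx hy A) (mul_support_fin hx hw A)]
  rfl

end NovProof

namespace NovProof
open Nov Function

variable {r : ℕ} {μ ν : H r →+ ℤ}

lemma mul_assoc' {x y w : H r → ℚ} (hx : NuFinite ν x) (hy : NuFinite ν y)
    {m₁ m₂ m₃ : ℤ} (hx' : MemGE ν m₁ x) (hy' : MemGE ν m₂ y) (hw' : MemGE ν m₃ w) :
    mul (mul x y) w = mul x (mul y w) := by
  classical
  funext A
  set Tx : Finset (H r) := (hx (ν A - m₂ - m₃)).toFinset with hTx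
  set Ty : Finset (H r) := (hy (ν A - m₁ - m₃)).toFinset with hTy
  set S : Finset (H r) := Finset.image₂ (· + ·) Tx Ty with hS
  have memTx : ∀ C, x C ≠ 0 → ν C ≤ ν A - m₂ - m₃ → C ∈ Tx := by
    intro C h1 h2; rw [hTx, Set.Finite.mem_toFinset]; exact ⟨h1, h2⟩
  have memTy : ∀ D, y D ≠ 0 → ν D ≤ ν A - m₁ - m₃ → D ∈ Ty := by
    intro D h1 h2; rw [hTy, Set.Finite.mem_toFinset]; exact ⟨h1, h2⟩
  have step1 : mul (mul x y) w A = ∑ B ∈ S, (mul x y) B * w (A - B) := by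
    refine mul_apply_eq_sum (fun B hB hwB => ?_)
    obtain ⟨C, hC, hyC⟩ := exists_ne_zero_of_mul_apply_ne_zero hB
    have h3 := hw' _ hwB; rw [map_sub] at h3
    have h4 := hx' _ hC
    have h5 := hy' _ hyC; rw [map_sub] at h5
    refine Finset.mem_image₂.2 ⟨C, memTx C hC (by omega), B - C,
      memTy _ hyC (by rw [map_sub]; omega), by abel⟩
  rw [step1]
  have step2 : ∀ B ∈ S, (mul x y) B * w (A - B)
      = ∑ C ∈ Tx, x C * y (B - C) * w (A - B) := by
    intro B _
    rw [← Finset.sum_mul]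
    by_cases hwB : w (A - B) = 0
    · simp [hwB]
    · congr 1
      refine mul_apply_eq_sum (fun C hC hyC => ?_)
      have h3 := hw' _ hwB; rw [map_sub] at h3
      have h5 := hy' _ hyC; rw [map_sub] at h5
      exact memTx C hC (by omega)
  rw [Finset.sum_congr rfl step2, Finset.sum_comm]
  have step5 : ∀ C ∈ Tx, ∑ B ∈ S, x C * y (B - C) * w (A - B)
      = x C * mul y w (A - C) := by
    intro C hC
    have hxC : x C ≠ 0 ∧ ν C ≤ ν A - m₂ - m₃ := by
      rwa [hTx, Set.Finite.mem_toFinset] at hC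
    have hCm : m₁ ≤ ν C := hx' _ hxC.1
    have e1 : ∀ B, x C * y (B - C) * w (A - B) = x C * (y (B - C) * w (A - B)) := by
      intro B; ring
    rw [Finset.sum_congr rfl (fun B _ => e1 B), ← Finset.mul_sum]
    congr 1
    have step5a : ∑ B ∈ S, y (B - C) * w (A - B) = ∑ᶠ B, y (B - C) * w (A - B) := by
      refine (finsum_eq_finset_sum_of_support_subset _ (fun B hB => ?_)).symm
      have hyB : y (B - C) ≠ 0 := fun h => hB (by simp [h])
      have hwB : w (A - B) ≠ 0 := fun h => hB (by simp [h])
      have h3 := hw' _ hwB; rw [map_sub] at h3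
      have h5 := hy' _ hyB; rw [map_sub] at h5
      exact Finset.mem_image₂.2 ⟨C, hC, B - C, memTy _ hyB (by rw [map_sub]; omega), by abel⟩
    rw [step5a, ← finsum_comp_equiv (Equiv.addRight C) (f := fun B => y (B - C) * w (A - B))]
    refine finsum_congr fun D => ?_
    have e2 : (Equiv.addRight C) D = D + C := rfl
    rw [e2]
    have e3 : D + C - C = D := by abel
    have e4 : A - (D + C) = A - C - D := by abel
    rw [e3, e4]
  rw [Finset.sum_congr rfl step5]
  refine (mul_apply_eq_sum (fun C hC hmC => ?_)).symm
  obtain ⟨D, hD, hwD⟩ := exists_ne_zero_of_mul_apply_ne_zero hmC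
  have h5 := hy' _ hD
  have h6 := hw' _ hwD
  simp only [map_sub] at h6
  exact memTx C hC (by omega)

end NovProof

namespace NovProof
open Nov Function

variable {r : ℕ} {μ ν : H r →+ ℤ}

lemma nufin_zero : NuFinite ν (0 : H r → ℚ) := by
  intro C; convert Set.finite_empty; ext A; simp

lemma nufin_delta (A₀ : H r) : NuFinite ν (delta A₀) := by
  intro C
  refine (Set.finite_singleton A₀).subset fun A hA => ?_
  simp only [Set.mem_singleton_iff]
  by_contra h
  exact hA.1 (by simp [Nov.delta, h])

lemma nufin_one : NuFinite ν (one r) := nufin_delta 0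

lemma nufin_add {x y : H r → ℚ} (hx : NuFinite ν x) (hy : NuFinite ν y) :
    NuFinite ν (x + y) := by
  intro C
  refine ((hx C).union (hy C)).subset fun A hA => ?_
  rcases hA with ⟨hne, hle⟩
  by_cases h : x A = 0
  · exact Or.inr ⟨fun h' => hne (by simp [Pi.add_apply, h, h']), hle⟩
  · exact Or.inl ⟨h, hle⟩

lemma nufin_neg {x : H r → ℚ} (hx : NuFinite ν x) : NuFinite ν (-x) := by
  intro C; refine (hx C).subset fun A hA => ⟨fun h => hA.1 (by simp [h]), hA.2⟩

lemma nufin_sub {x y : H r → ℚ} (hx : NuFinite ν x) (hy : NuFinite ν y) :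
    NuFinite ν (x - y) := by
  rw [sub_eq_add_neg]; exact nufin_add hx (nufin_neg hy)

lemma nufin_smul (c : ℚ) {x : H r → ℚ} (hx : NuFinite ν x) : NuFinite ν (c • x) := by
  intro C
  refine (hx C).subset fun A hA => ⟨fun h => hA.1 (by simp [h]), hA.2⟩

lemma nufin_mul' {x y : H r → ℚ} (hx : NuFinite ν x) (hy : NuFinite ν y) :
    NuFinite ν (mul x y) := by
  obtain ⟨m₁, h₁⟩ := nufin_exists_ge hx
  obtain ⟨m₂, h₂⟩ := nufin_exists_ge hy
  exact nufin_mul hx hy h₁ h₂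

/-- The Novikov-type ring of `ν`-finite functions. -/
def NovR (r : ℕ) (ν : H r →+ ℤ) : Type := {x : H r → ℚ // NuFinite ν x}

namespace NovR

variable (X Y : NovR r ν)

instance : Zero (NovR r ν) := ⟨⟨0, nufin_zero⟩⟩
noncomputable instance : One (NovR r ν) := ⟨⟨one r, nufin_one⟩⟩
instance : Add (NovR r ν) := ⟨fun X Y => ⟨X.1 + Y.1, nufin_add X.2 Y.2⟩⟩
instance : Neg (NovR r ν) := ⟨fun X => ⟨-X.1, nufin_neg X.2⟩⟩
instance : Sub (NovR r ν) := ⟨fun X Y => ⟨X.1 - Y.1, nufin_sub X.2 Y.2⟩⟩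
noncomputable instance : Mul (NovR r ν) := ⟨fun X Y => ⟨mul X.1 Y.1, nufin_mul' X.2 Y.2⟩⟩

noncomputable instance : CommRing (NovR r ν) where
  nsmul := nsmulRec
  zsmul := zsmulRec
  add_assoc X Y W := Subtype.ext (add_assoc _ _ _)
  zero_add X := Subtype.ext (zero_add _)
  add_zero X := Subtype.ext (add_zero _)
  add_comm X Y := Subtype.ext (add_comm _ _)
  neg_add_cancel X := Subtype.ext (neg_add_cancel _)
  sub_eq_add_neg X Y := Subtype.ext (sub_eq_add_neg _ _)
  left_distrib X Y W := by
    obtain ⟨m₁, h₁⟩ := nufin_exists_ge X.2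
    obtain ⟨m₂, h₂⟩ := nufin_exists_ge Y.2
    obtain ⟨m₃, h₃⟩ := nufin_exists_ge W.2
    exact Subtype.ext (mul_add' X.2 h₁ h₂ h₃)
  right_distrib X Y W := by
    obtain ⟨m₁, h₁⟩ := nufin_exists_ge X.2
    obtain ⟨m₂, h₂⟩ := nufin_exists_ge Y.2
    obtain ⟨m₃, h₃⟩ := nufin_exists_ge W.2
    refine Subtype.ext ?_
    show mul (X.1 + Y.1) W.1 = mul X.1 W.1 + mul Y.1 W.1
    rw [mul_comm' _ W.1, mul_comm' X.1 W.1, mul_comm' Y.1 W.1]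
    exact mul_add' W.2 h₃ h₁ h₂
  zero_mul X := Subtype.ext (zero_mul' _)
  mul_zero X := Subtype.ext (by show mul X.1 0 = 0; rw [mul_comm']; exact zero_mul' _)
  mul_assoc X Y W := by
    obtain ⟨m₁, h₁⟩ := nufin_exists_ge X.2
    obtain ⟨m₂, h₂⟩ := nufin_exists_ge Y.2
    obtain ⟨m₃, h₃⟩ := nufin_exists_ge W.2
    exact Subtype.ext (mul_assoc' X.2 Y.2 h₁ h₂ h₃)
  one_mul X := Subtype.ext (one_mul' _)
  mul_one X := Subtype.ext (mul_one' _)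
  mul_comm X Y := Subtype.ext (mul_comm' _ _)

@[simp] lemma val_mul : (X * Y).1 = mul X.1 Y.1 := rfl
@[simp] lemma val_add : (X + Y).1 = X.1 + Y.1 := rfl
@[simp] lemma val_sub : (X - Y).1 = X.1 - Y.1 := rfl
@[simp] lemma val_neg : (-X).1 = -X.1 := rfl
@[simp] lemma val_one : (1 : NovR r ν).1 = one r := rfl
@[simp] lemma val_zero : (0 : NovR r ν).1 = 0 := rfl

lemma val_pow (n : ℕ) : (X ^ n).1 = (npowRec n X).1 := rfl

/-- `MemGE` at the `NovR` level. -/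
def GE' (m : ℤ) (X : NovR r ν) : Prop := MemGE ν m X.1

lemma GE'.mul {m₁ m₂ : ℤ} {X Y : NovR r ν} (hX : X.GE' m₁) (hY : Y.GE' m₂) :
    (X * Y).GE' (m₁ + m₂) := memGE_mul hX hY

lemma GE'.one : (1 : NovR r ν).GE' 0 := by
  intro A hA
  have : A = 0 := by
    by_contra h
    exact hA (by simp [Nov.one, Nov.delta, h])
  simp [this]

lemma GE'.add {m : ℤ} {X Y : NovR r ν} (hX : X.GE' m) (hY : Y.GE' m) :
    (X + Y).GE' m := by
  intro A hA
  by_cases h : X.1 A = 0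
  · exact hY A (fun h' => hA (by simp [h, h']))
  · exact hX A h

lemma GE'.pow {m : ℤ} {X : NovR r ν} (hX : X.GE' m) (hm : 0 ≤ m) (n : ℕ) :
    (X ^ n).GE' (n * m) := by
  induction n with
  | zero => simpa using GE'.one
  | succ n ih =>
      have h2 := ih.mul hX
      rw [pow_succ]
      have h3 : ((n:ℤ) + 1) * m = (n:ℤ) * m + m := by ring
      rw [Nat.cast_add, Nat.cast_one, h3]
      exact h2

end NovR

end NovProof

namespace NovProof
open Nov Function

variable {r : ℕ} {μ ν : H r →+ ℤ} {Astar : H r} {z : H r → (H r →+ ℚ)}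

lemma z_nu_ge (hz : Admissible μ ν Astar z) (hνA : ν Astar = -1)
    {A₁ : H r} (h : z A₁ ≠ 0) : -1 ≤ ν A₁ := by
  by_contra hc
  push_neg at hc
  by_cases hA : A₁ = Astar
  · rw [hA, hνA] at hc; omega
  · exact h (hz.vanish_neg A₁ hA (by omega))

lemma z_ne_zero {A₁ B : H r} (h : z A₁ B ≠ 0) : z A₁ ≠ 0 :=
  fun h' => h (by rw [h']; rfl)

lemma dz_support_subset (hz : Admissible μ ν Astar z) (hνA : ν Astar = -1)
    (x : H r → ℚ) (A : H r) :
    (support fun B => z (A - B) B * x B) ⊆ {B | x B ≠ 0 ∧ ν B ≤ ν A + 1} := by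
  intro B hB
  have h1 : z (A - B) B ≠ 0 := fun h => hB (by simp [h])
  have h2 : x B ≠ 0 := fun h => hB (by simp [h])
  have h3 := z_nu_ge hz hνA (z_ne_zero h1)
  rw [map_sub] at h3
  exact ⟨h2, by omega⟩

lemma dz_support_fin (hz : Admissible μ ν Astar z) (hνA : ν Astar = -1)
    {x : H r → ℚ} (hx : NuFinite ν x) (A : H r) :
    (support fun B => z (A - B) B * x B).Finite :=
  (hx (ν A + 1)).subset (dz_support_subset hz hνA x A)

lemma dz_apply_eq_sum {x : H r → ℚ} {A : H r} {T : Finset (H r)}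
    (h : ∀ B, z (A - B) B ≠ 0 → x B ≠ 0 → B ∈ T) :
    dz z x A = ∑ B ∈ T, z (A - B) B * x B := by
  refine finsum_eq_finset_sum_of_support_subset _ (fun B hB => ?_)
  exact h B (fun h' => hB (by simp [h'])) (fun h' => hB (by simp [h']))

lemma exists_ne_zero_of_dz_apply_ne_zero {x : H r → ℚ} {A : H r}
    (h : dz z x A ≠ 0) : ∃ B, z (A - B) B ≠ 0 ∧ x B ≠ 0 := by
  by_contra hc
  push_neg at hc
  refine h ?_
  have : ∀ B : H r, z (A - B) B * x B = 0 := by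
    intro B
    by_cases hB : z (A - B) B = 0
    · simp [hB]
    · simp [hc B hB]
  simp [Nov.dz, this]

lemma nufin_dz (hz : Admissible μ ν Astar z) (hνA : ν Astar = -1)
    {x : H r → ℚ} (hx : NuFinite ν x) {m : ℤ} (hx' : MemGE ν m x) :
    NuFinite ν (dz z x) := by
  intro C
  refine (Set.Finite.image2 (· + ·) (hz.nu_fin (C - m)) (hx (C + 1))).subset ?_
  rintro A ⟨hA, hAC⟩
  obtain ⟨B, hB, hB'⟩ := exists_ne_zero_of_dz_apply_ne_zero hA
  have h1 := hx' _ hB'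
  have h2 := z_nu_ge hz hνA (z_ne_zero hB)
  have h3 : ν (A - B) = ν A - ν B := by rw [map_sub]
  exact ⟨A - B, ⟨z_ne_zero hB, by omega⟩, B, ⟨hB', by omega⟩,
    by show A - B + B = A; abel⟩

lemma memGE_dz (hz : Admissible μ ν Astar z) (hνA : ν Astar = -1)
    {x : H r → ℚ} {m : ℤ} (hx' : MemGE ν m x) : MemGE ν (m - 1) (dz z x) := by
  intro A hA
  obtain ⟨B, hB, hB'⟩ := exists_ne_zero_of_dz_apply_ne_zero hA
  have h1 := hx' _ hB'
  have h2 := z_nu_ge hz hνA (z_ne_zero hB)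
  rw [map_sub] at h2
  omega

lemma dz_zero : dz z (0 : H r → ℚ) = 0 := by
  funext A; show ∑ᶠ B, z (A - B) B * 0 = 0; simp

lemma dz_add (hz : Admissible μ ν Astar z) (hνA : ν Astar = -1)
    {x y : H r → ℚ} (hx : NuFinite ν x) (hy : NuFinite ν y) :
    dz z (x + y) = dz z x + dz z y := by
  funext A
  show ∑ᶠ B, z (A - B) B * (x + y) B = dz z x A + dz z y A
  have h1 : ∀ B : H r, z (A - B) B * (x + y) B
      = z (A - B) B * x B + z (A - B) B * y B := by
    intro B; simp [Pi.add_apply, mul_add]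
  rw [finsum_congr h1,
    finsum_add_distrib (dz_support_fin hz hνA hx A) (dz_support_fin hz hνA hy A)]
  rfl

lemma dz_smul (c : ℚ) (x : H r → ℚ) : dz z (c • x) = c • dz z x := by
  funext A
  show ∑ᶠ B, z (A - B) B * (c • x) B = c * dz z x A
  have h1 : ∀ B : H r, z (A - B) B * (c • x) B = c • (z (A - B) B * x B) := by
    intro B; simp [Pi.smul_apply, smul_eq_mul]; ring
  rw [finsum_congr h1, ← smul_finsum]
  rfl

end NovProof

namespace NovProof
open Nov Function

variable {r : ℕ} {μ ν : H r →+ ℤ} {Astar : H r} {z : H r → (H r →+ ℚ)}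

/-- Leibniz rule for `∂_z`. -/
lemma dz_mul (hz : Admissible μ ν Astar z) (hνA : ν Astar = -1)
    {x y : H r → ℚ} (hx : NuFinite ν x) (hy : NuFinite ν y)
    {m₁ m₂ : ℤ} (hx' : MemGE ν m₁ x) (hy' : MemGE ν m₂ y) :
    dz z (mul x y) = mul (dz z x) y + mul x (dz z y) := by
  classical
  funext A
  set Tx : Finset (H r) := (hx (ν A + 1 - m₂)).toFinset with hTx
  set Ty : Finset (H r) := (hy (ν A + 1 - m₁)).toFinset with hTy
  set S : Finset (H r) := Finset.image₂ (· + ·) Tx Ty with hS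
  have memTx : ∀ C, x C ≠ 0 → ν C ≤ ν A + 1 - m₂ → C ∈ Tx := by
    intro C h1 h2; rw [hTx, Set.Finite.mem_toFinset]; exact ⟨h1, h2⟩
  have memTy : ∀ D, y D ≠ 0 → ν D ≤ ν A + 1 - m₁ → D ∈ Ty := by
    intro D h1 h2; rw [hTy, Set.Finite.mem_toFinset]; exact ⟨h1, h2⟩
  -- LHS as a finite double sum
  have step1 : dz z (mul x y) A = ∑ B ∈ S, z (A - B) B * (mul x y) B := by
    refine dz_apply_eq_sum (fun B hB hmB => ?_)
    obtain ⟨C, hC, hyC⟩ := exists_ne_zero_of_mul_apply_ne_zero hmB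
    have h3 := z_nu_ge hz hνA (z_ne_zero hB); rw [map_sub] at h3
    have h4 := hx' _ hC
    have h5 := hy' _ hyC; rw [map_sub] at h5
    exact Finset.mem_image₂.2 ⟨C, memTx C hC (by omega), B - C,
      memTy _ hyC (by rw [map_sub]; omega), by abel⟩
  have step2 : ∀ B ∈ S, z (A - B) B * (mul x y) B
      = ∑ C ∈ Tx, z (A - B) B * (x C * y (B - C)) := by
    intro B _
    rw [← Finset.mul_sum]
    by_cases hzB : z (A - B) B = 0
    · simp [hzB]
    · congr 1
      refine mul_apply_eq_sum (fun C hC hyC => ?_)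
      have h3 := z_nu_ge hz hνA (z_ne_zero hzB); rw [map_sub] at h3
      have h5 := hy' _ hyC; rw [map_sub] at h5
      exact memTx C hC (by omega)
  rw [step1, Finset.sum_congr rfl step2, Finset.sum_comm]
  -- rewrite each inner (over B) sum as a finsum, reindex, split
  have supp1 : ∀ C, x C ≠ 0 →
      (support fun D => z (A - C - D) C * x C * y D).Finite := by
    intro C hC
    refine (hy (ν A + 1 - ν C)).subset (fun D hD => ?_)
    have h1 : z (A - C - D) C ≠ 0 := fun h => hD (by simp [h])
    have h2 : y D ≠ 0 := fun h => hD (by simp [h])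
    have h3 := z_nu_ge hz hνA (z_ne_zero h1)
    rw [map_sub, map_sub] at h3
    exact ⟨h2, by omega⟩
  have supp2 : ∀ C, x C ≠ 0 →
      (support fun D => z (A - C - D) D * x C * y D).Finite := by
    intro C hC
    refine (hy (ν A + 1 - ν C)).subset (fun D hD => ?_)
    have h1 : z (A - C - D) D ≠ 0 := fun h => hD (by simp [h])
    have h2 : y D ≠ 0 := fun h => hD (by simp [h])
    have h3 := z_nu_ge hz hνA (z_ne_zero h1)
    rw [map_sub, map_sub] at h3
    exact ⟨h2, by omega⟩
  have step3 : ∀ C ∈ Tx, ∑ B ∈ S, z (A - B) B * (x C * y (B - C))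
      = (∑ᶠ D, z (A - C - D) C * x C * y D) + ∑ᶠ D, z (A - C - D) D * x C * y D := by
    intro C hC
    have hxC : x C ≠ 0 ∧ ν C ≤ ν A + 1 - m₂ := by
      rwa [hTx, Set.Finite.mem_toFinset] at hC
    have hCm : m₁ ≤ ν C := hx' _ hxC.1
    have e0 : ∑ B ∈ S, z (A - B) B * (x C * y (B - C))
        = ∑ᶠ B, z (A - B) B * (x C * y (B - C)) := by
      refine (finsum_eq_finset_sum_of_support_subset _ (fun B hB => ?_)).symm
      have h1 : z (A - B) B ≠ 0 := fun h => hB (by simp [h])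
      have h2 : y (B - C) ≠ 0 := fun h => hB (by simp [h])
      have h3 := z_nu_ge hz hνA (z_ne_zero h1); rw [map_sub] at h3
      have h5 := hy' _ h2; rw [map_sub] at h5
      exact Finset.mem_image₂.2 ⟨C, hC, B - C,
        memTy _ h2 (by rw [map_sub]; omega), by abel⟩
    rw [e0, ← finsum_comp_equiv (Equiv.addRight C)
      (f := fun B => z (A - B) B * (x C * y (B - C)))]
    have e1 : ∀ D : H r, z (A - (Equiv.addRight C D)) (Equiv.addRight C D)
        * (x C * y ((Equiv.addRight C D) - C))
        = z (A - C - D) C * x C * y D + z (A - C - D) D * x C * y D := by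
      intro D
      have e2 : (Equiv.addRight C) D = D + C := rfl
      have e3 : D + C - C = D := by abel
      have e4 : A - (D + C) = A - C - D := by abel
      rw [e2, e3, e4, map_add]
      ring
    rw [finsum_congr e1, finsum_add_distrib (supp1 C hxC.1) (supp2 C hxC.1)]
  rw [Finset.sum_congr rfl step3, Finset.sum_add_distrib]
  -- identify the two pieces with the two RHS terms
  have piece2 : ∑ C ∈ Tx, ∑ᶠ D, z (A - C - D) D * x C * y D = mul x (dz z y) A := by
    have e5 : mul x (dz z y) A = ∑ C ∈ Tx, x C * dz z y (A - C) := by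
      refine mul_apply_eq_sum (fun C hC hdC => ?_)
      obtain ⟨D, hD, hD'⟩ := exists_ne_zero_of_dz_apply_ne_zero hdC
      have h3 := z_nu_ge hz hνA (z_ne_zero hD)
      have h5 := hy' _ hD'
      simp only [map_sub] at h3
      exact memTx C hC (by omega)
    rw [e5]
    refine Finset.sum_congr rfl (fun C hC => ?_)
    have hxC : x C ≠ 0 := ((hTx ▸ Set.Finite.mem_toFinset _).1 hC).1
    have e6 : x C * dz z y (A - C) = ∑ᶠ D, x C * (z (A - C - D) D * y D) := by
      show x C * (∑ᶠ D, z (A - C - D) D * y D) = _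
      rw [mul_finsum _ _]
    rw [e6]
    exact finsum_congr (fun D => by ring)
  have piece1 : ∑ C ∈ Tx, ∑ᶠ D, z (A - C - D) C * x C * y D = mul (dz z x) y A := by
    have e7 : mul (dz z x) y A = ∑ᶠ D, dz z x (A - D) * y D := by
      show (∑ᶠ B, dz z x B * y (A - B)) = _
      rw [← finsum_comp_equiv (Equiv.subLeft A) (f := fun B => dz z x B * y (A - B))]
      refine finsum_congr fun D => ?_
      have e8 : (Equiv.subLeft A) D = A - D := rfl
      rw [e8, sub_sub_cancel]
    have e9 : mul (dz z x) y A = ∑ D ∈ Ty, dz z x (A - D) * y D := by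
      rw [e7]
      refine finsum_eq_finset_sum_of_support_subset _ (fun D hD => ?_)
      have h1 : dz z x (A - D) ≠ 0 := fun h => hD (by simp [h])
      have h2 : y D ≠ 0 := fun h => hD (by simp [h])
      have h3 := memGE_dz hz hνA hx' _ h1
      rw [map_sub] at h3
      exact memTy D h2 (by omega)
    have e10 : ∀ D ∈ Ty, dz z x (A - D) * y D
        = ∑ C ∈ Tx, z (A - D - C) C * x C * y D := by
      intro D hD
      have hyD : y D ≠ 0 ∧ ν D ≤ ν A + 1 - m₁ := by
        rwa [hTy, Set.Finite.mem_toFinset] at hD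
      have hDm : m₂ ≤ ν D := hy' _ hyD.1
      rw [← Finset.sum_mul]
      congr 1
      refine dz_apply_eq_sum (fun C hC hxC => ?_)
      have h3 := z_nu_ge hz hνA (z_ne_zero hC)
      simp only [map_sub] at h3
      exact memTx C hxC (by omega)
      
    rw [e9, Finset.sum_congr rfl e10, Finset.sum_comm]
    refine Finset.sum_congr rfl (fun C hC => ?_)
    have hxC : x C ≠ 0 := ((hTx ▸ Set.Finite.mem_toFinset _).1 hC).1
    have e11 : ∑ D ∈ Ty, z (A - D - C) C * x C * y D
        = ∑ᶠ D, z (A - D - C) C * x C * y D := by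
      refine (finsum_eq_finset_sum_of_support_subset _ (fun D hD => ?_)).symm
      have h1 : z (A - D - C) C ≠ 0 := fun h => hD (by simp [h])
      have h2 : y D ≠ 0 := fun h => hD (by simp [h])
      have h3 := z_nu_ge hz hνA (z_ne_zero h1)
      have h4 := hx' _ hxC
      simp only [map_sub] at h3
      exact memTy D h2 (by omega)
    have e12 : (∑ᶠ D, z (A - C - D) C * x C * y D)
        = ∑ᶠ D, z (A - D - C) C * x C * y D :=
      finsum_congr (fun D => by rw [sub_right_comm])
    rw [e12]
    exact e11.symm
  rw [piece1, piece2]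
  rfl

end NovProof

namespace NovProof
open Nov Function

variable {r : ℕ} {μ ν : H r →+ ℤ} {Astar : H r} {z : H r → (H r →+ ℚ)}

namespace NovR

/-- Geometric series: `1 + W` is invertible when `W ∈ Λ_{≥1}`, with inverse in
`Λ_{≥0}`. -/
lemma geom_inverse {W : NovR r ν} (hW : W.GE' 1) :
    ∃ S : NovR r ν, S.GE' 0 ∧ (1 + W) * S = 1 := by
  classical
  have hWn : ∀ n : ℕ, (W ^ n).GE' (n : ℤ) := by
    intro n
    have := hW.pow (by omega) n
    simpa using this
  have hWzero : ∀ (n : ℕ) (A : H r), ν A < (n : ℤ) → (W ^ n).1 A = 0 := by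
    intro n A hA
    by_contra h
    exact absurd (hWn n A h) (by omega)
  set s : H r → ℚ := fun A => ∑ n ∈ Finset.range ((ν A).toNat + 1),
    (-1 : ℚ) ^ n * (W ^ n).1 A with hs
  have s_eq : ∀ (A : H r) (N : ℕ), (ν A).toNat + 1 ≤ N →
      s A = ∑ n ∈ Finset.range N, (-1 : ℚ) ^ n * (W ^ n).1 A := by
    intro A N hN
    refine Finset.sum_subset (Finset.range_subset_range.2 hN) (fun n hn hn' => ?_)
    simp only [Finset.mem_range, not_lt] at hn'
    have : ν A < (n : ℤ) := by
      have := Int.self_le_toNat (ν A)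
      omega
    rw [hWzero n A this, mul_zero]
  have s_term : ∀ A : H r, s A ≠ 0 → ∃ n : ℕ, (n : ℤ) ≤ ν A ∧ (W ^ n).1 A ≠ 0 := by
    intro A hA
    obtain ⟨n, hn, hne⟩ := Finset.exists_ne_zero_of_sum_ne_zero hA
    refine ⟨n, ?_, fun h => hne (by rw [h, mul_zero])⟩
    by_contra h
    push_neg at h
    exact hne (by rw [hWzero n A h, mul_zero])
  have nufin_s : NuFinite ν s := by
    intro C
    have : {A : H r | s A ≠ 0 ∧ ν A ≤ C} ⊆
        ⋃ n ∈ Finset.range (C.toNat + 1), {A : H r | (W ^ n).1 A ≠ 0 ∧ ν A ≤ C} := by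
      rintro A ⟨hA, hAC⟩
      obtain ⟨n, hn1, hn2⟩ := s_term A hA
      have hν0 : 0 ≤ ν A := le_trans (by exact_mod_cast Nat.zero_le n) hn1
      refine Set.mem_biUnion (Finset.mem_range.2 ?_) ⟨hn2, hAC⟩
      have := Int.toNat_le_toNat hAC
      omega
    refine (Set.Finite.biUnion (Finset.finite_toSet _) (fun n _ => (W ^ n).2 C)).subset this
  set S0 : NovR r ν := (⟨s, nufin_s⟩ : {x : H r → ℚ // NuFinite ν x}) with hS0
  have hS0val : S0.1 = s := rfl
  refine ⟨S0, ?_, ?_⟩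
  · intro A hA
    rw [hS0val] at hA
    obtain ⟨n, hn1, -⟩ := s_term A hA
    exact le_trans (by exact_mod_cast Nat.zero_le n) hn1
  · have key : ∀ A : H r, s A + mul W.1 s A = one r A := by
      intro A
      set N : ℕ := (ν A).toNat with hN
      have hmul : mul W.1 s A
          = ∑ n ∈ Finset.range (N + 1), (-1 : ℚ) ^ n * (W ^ (n + 1)).1 A := by
        have e1 : ∀ B : H r, W.1 B * s (A - B)
            = ∑ n ∈ Finset.range (N + 1), W.1 B * ((-1 : ℚ) ^ n * (W ^ n).1 (A - B)) := by
          intro B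
          by_cases hB : W.1 B = 0
          · simp [hB]
          · rw [← Finset.mul_sum]
            congr 1
            refine s_eq (A - B) (N + 1) ?_
            have h1 := hW _ hB
            have h2 : ν (A - B) = ν A - ν B := by rw [map_sub]
            have := Int.toNat_le_toNat (show ν (A - B) ≤ ν A by omega)
            omega
        have e2 : mul W.1 s A = ∑ᶠ B, ∑ n ∈ Finset.range (N + 1),
            W.1 B * ((-1 : ℚ) ^ n * (W ^ n).1 (A - B)) := finsum_congr e1
        rw [e2, finsum_sum_comm]
        · refine Finset.sum_congr rfl (fun n _ => ?_)
          have e3 : ∀ B : H r, W.1 B * ((-1 : ℚ) ^ n * (W ^ n).1 (A - B))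
              = (-1 : ℚ) ^ n * (W.1 B * (W ^ n).1 (A - B)) := fun B => by ring
          rw [finsum_congr e3,
            ← mul_finsum _ _]
          congr 1
          have : W * W ^ n = W ^ (n + 1) := (pow_succ' W n).symm
          calc (∑ᶠ B, W.1 B * (W ^ n).1 (A - B)) = (W * W ^ n).1 A := rfl
            _ = (W ^ (n + 1)).1 A := by rw [this]
        · intro n _
          refine ((mul_support_fin W.2 (hWn n) A).subset (fun B hB => ?_))
          simp only [Function.mem_support] at hB ⊢
          intro h
          apply hB
          have e : W.1 B * ((-1 : ℚ) ^ n * (W ^ n).1 (A - B))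
              = (-1 : ℚ) ^ n * (W.1 B * (W ^ n).1 (A - B)) := by ring
          rw [e, h, mul_zero]
      rw [hmul, hs]
      have e4 : ∀ n ∈ Finset.range (N + 1),
          (-1 : ℚ) ^ n * (W ^ n).1 A + (-1 : ℚ) ^ n * (W ^ (n + 1)).1 A
          = (fun m : ℕ => (-1 : ℚ) ^ m * (W ^ m).1 A) n
            - (fun m : ℕ => (-1 : ℚ) ^ m * (W ^ m).1 A) (n + 1) := by
        intro n _
        simp only [pow_succ]
        ring
      rw [← Finset.sum_add_distrib, Finset.sum_congr rfl e4, Finset.sum_range_sub']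
      have e5 : (W ^ (N + 1)).1 A = 0 := by
        refine hWzero (N + 1) A ?_
        have := Int.self_le_toNat (ν A)
        omega
      simp only [e5, pow_zero, pow_zero, mul_zero, sub_zero, one_mul]
      rfl
    have h1 : S0 + W * S0 = 1 := by
      apply Subtype.ext
      funext A
      exact key A
    calc (1 + W) * S0 = S0 + W * S0 := by ring
      _ = 1 := h1

/-- If `X, Y ∈ Λ_{≥0}` and `X·Y ≡ 1 mod Λ_{≥1}`, then `X` has an inverse in
`Λ_{≥0}`. -/
lemma exists_inv_of_almost {X Y : NovR r ν} (hY : Y.GE' 0)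
    (hXY : (X * Y - 1).GE' 1) : ∃ V : NovR r ν, V.GE' 0 ∧ X * V = 1 := by
  obtain ⟨S, hS, hS1⟩ := geom_inverse hXY
  refine ⟨Y * S, by simpa using hY.mul hS, ?_⟩
  have : 1 + (X * Y - 1) = X * Y := by ring
  rw [this] at hS1
  calc X * (Y * S) = X * Y * S := by ring
    _ = 1 := hS1

end NovR

end NovProof

namespace NovProof
open Nov Function

variable {r : ℕ} {μ ν : H r →+ ℤ} {Astar : H r} {z : H r → (H r →+ ℚ)}

/-- Homogeneity (of degree `j`) of the support. -/
def IsHom (μ : H r →+ ℤ) (j : ℤ) (x : H r → ℚ) : Prop :=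
  ∀ A, x A ≠ 0 → 2 * μ A = j

lemma isHom_one : IsHom μ 0 (one r) := by
  intro A hA
  have : A = 0 := by by_contra h; exact hA (by simp [Nov.one, Nov.delta, h])
  simp [this]

lemma isHom_add {j : ℤ} {x y : H r → ℚ} (hx : IsHom μ j x) (hy : IsHom μ j y) :
    IsHom μ j (x + y) := by
  intro A hA
  by_cases h : x A = 0
  · exact hy A (fun h' => hA (by simp [Pi.add_apply, h, h']))
  · exact hx A h

lemma isHom_mul {j l : ℤ} {x y : H r → ℚ} (hx : IsHom μ j x) (hy : IsHom μ l y) :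
    IsHom μ (j + l) (mul x y) := by
  intro A hA
  obtain ⟨B, hB, hB'⟩ := exists_ne_zero_of_mul_apply_ne_zero hA
  have h1 := hx _ hB
  have h2 := hy _ hB'
  rw [map_sub] at h2
  omega

lemma isHom_dz (hz : Admissible μ ν Astar z) {j : ℤ} {x : H r → ℚ}
    (hx : IsHom μ j x) : IsHom μ (j + 2) (dz z x) := by
  intro A hA
  obtain ⟨B, hB, hB'⟩ := exists_ne_zero_of_dz_apply_ne_zero hA
  have h1 := hz.supp_mu _ (z_ne_zero hB)
  have h2 := hx _ hB'
  rw [map_sub] at h1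
  omega

lemma memLambda_of_isHom {j : ℤ} {X : NovR r ν} (hX : IsHom μ j X.1) :
    MemLambda μ ν X.1 := by
  refine ⟨X.2, (Set.finite_singleton j).subset ?_⟩
  rintro i ⟨A, hA, hAi⟩
  rw [← hAi]
  exact (hX A hA).symm ▸ rfl

lemma memLambda_mul {j : ℤ} {X Y : NovR r ν} (hX : IsHom μ j X.1)
    (hY : MemLambda μ ν Y.1) : MemLambda μ ν (X * Y).1 := by
  refine ⟨(X * Y).2, (hY.2.image (fun d => j + d)).subset ?_⟩
  rintro i ⟨A, hA, hAi⟩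
  obtain ⟨B, hB, hB'⟩ := exists_ne_zero_of_mul_apply_ne_zero hA
  have h1 := hX _ hB
  refine ⟨2 * μ (A - B), ⟨A - B, hB', rfl⟩, ?_⟩
  show j + 2 * μ (A - B) = i
  rw [← hAi, map_sub]
  omega

/-- Projection to the degree-`j` part. -/
def compN (μ : H r →+ ℤ) (j : ℤ) (X : NovR r ν) : NovR r ν :=
  ⟨fun A => if 2 * μ A = j then X.1 A else 0, by
    intro C
    refine (X.2 C).subset fun A hA => ?_
    refine ⟨fun h => hA.1 ?_, hA.2⟩
    simp [h]⟩

lemma compN_isHom (j : ℤ) (X : NovR r ν) : IsHom μ j (compN μ j X).1 := by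
  intro A hA
  by_contra h
  exact hA (if_neg h)

lemma compN_GE {m j : ℤ} {X : NovR r ν} (hX : X.GE' m) : (compN μ j X).GE' m := by
  intro A hA
  refine hX A (fun h => hA ?_)
  show (if 2 * μ A = j then X.1 A else 0) = 0
  simp [h]

lemma mul_compN {j l : ℤ} {X : NovR r ν} (hX : IsHom μ j X.1) (Y : NovR r ν) :
    X * compN μ l Y = compN μ (j + l) (X * Y) := by
  apply Subtype.ext
  funext A
  show (∑ᶠ B, X.1 B * (if 2 * μ (A - B) = l then Y.1 (A - B) else 0))
      = if 2 * μ A = j + l then mul X.1 Y.1 A else 0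
  by_cases h : 2 * μ A = j + l
  · rw [if_pos h]
    refine finsum_congr fun B => ?_
    by_cases hB : X.1 B = 0
    · simp [hB]
    · have h1 := hX _ hB
      have h2 : 2 * μ (A - B) = l := by rw [map_sub]; omega
      rw [if_pos h2]
  · rw [if_neg h]
    have : ∀ B : H r, X.1 B * (if 2 * μ (A - B) = l then Y.1 (A - B) else 0) = 0 := by
      intro B
      by_cases hB : X.1 B = 0
      · simp [hB]
      · have h1 := hX _ hB
        have h2 : ¬(2 * μ (A - B) = l) := by rw [map_sub]; omega
        rw [if_neg h2, mul_zero]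
    rw [finsum_congr this, finsum_zero]

lemma compN_one : compN μ 0 (1 : NovR r ν) = 1 := by
  apply Subtype.ext
  funext A
  show (if 2 * μ A = 0 then one r A else 0) = one r A
  by_cases h : A = 0
  · simp [h]
  · have : one r A = 0 := by simp [Nov.one, Nov.delta, h]
    simp [this]

/-- Characterisation of `invN` via any `NovR` inverse with `MemLambda`. -/
lemma invN_eq (X Y : NovR r ν) (hY : MemLambda μ ν Y.1) (hxy : X * Y = 1) :
    invN μ ν X.1 = Y.1 := by
  classical
  have h1 : mul X.1 Y.1 = one r := congrArg Subtype.val hxy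
  have h2' : Y * X = 1 := by rw [mul_comm]; exact hxy
  have h2 : mul Y.1 X.1 = one r := congrArg Subtype.val h2'
  have hex : ∃ y, MemLambda μ ν y ∧ mul X.1 y = one r ∧ mul y X.1 = one r :=
    ⟨Y.1, hY, h1, h2⟩
  unfold Nov.invN
  rw [dif_pos hex]
  obtain ⟨hL, h3, h4⟩ := hex.choose_spec
  set C : NovR r ν := ⟨hex.choose, hL.1⟩ with hC
  have h3' : X * C = 1 := Subtype.ext h3
  have : C = Y := by
    calc C = C * 1 := (mul_one C).symm
      _ = C * (X * Y) := by rw [hxy]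
      _ = (X * C) * Y := by ring
      _ = 1 * Y := by rw [h3']
      _ = Y := one_mul Y
  exact congrArg Subtype.val this

end NovProof

namespace NovProof

/-- Generic Schwarzian invariance computation in a commutative ring equipped
with a derivation. -/
lemma schwarz_calc {R : Type*} [CommRing R] (D : R → R)
    (hD : ∀ x y, D (x * y) = D x * y + x * D y)
    (hDadd : ∀ x y, D (x + y) = D x + D y)
    (f a b u u' a' F F' G' half : R)
    (hu : u = a + b * f)
    (huu' : u * u' = 1) (haa' : a * a' = 1)
    (hF : F = D f) (hFF' : F * F' = 1)
    (hG' : G' = a' * u * u * F')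
    (hDa : D a = 0) (hDb : D b = 0)
    (hhalf : 2 * half = 1) :
    D (f * u') * G' = 1 ∧
    D (D (D (f * u')) * G')
        - half * ((D (D (f * u')) * G') * (D (D (f * u')) * G'))
      = D (D (D f) * F') - half * ((D (D f) * F') * (D (D f) * F')) := by
  have d1 : D 1 = 0 := by
    have h := hD 1 1
    rw [mul_one, mul_one, one_mul] at h
    linear_combination -h
  have d0 : D 0 = 0 := by
    have h := hD 0 0
    rw [mul_zero, zero_mul, mul_zero, add_zero] at h
    exact h
  have hDneg : ∀ x : R, D (-x) = -D x := by
    intro x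
    have h := hDadd x (-x)
    rw [add_neg_cancel, d0] at h
    linear_combination -h
  have hDsub : ∀ x y : R, D (x - y) = D x - D y := by
    intro x y
    rw [sub_eq_add_neg, hDadd, hDneg, sub_eq_add_neg]
  have hD2 : ∀ x : R, D (2 * x) = 2 * D x := by
    intro x
    have h2 : D (2 : R) = 0 := by
      have h := hDadd 1 1
      rw [d1, add_zero] at h
      exact (by rw [show (2:R) = 1 + 1 by norm_num, h])
    rw [hD, h2, zero_mul, zero_add]
  -- derivative of u
  have hDu : D u = b * F := by
    rw [hu, hDadd, hDa, hD, hDb, zero_mul, zero_add, zero_add, hF]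
  -- derivative of u'
  have e1 : D u * u' + u * D u' = 0 := by
    have h := hD u u'
    rw [huu', d1] at h
    linear_combination -h
  have hDu' : D u' = -(b * F * (u' * u')) := by
    linear_combination u' * e1 - u' * u' * hDu - D u' * huu'
  -- derivative of f·u'
  have hG : D (f * u') = a * F * (u' * u') := by
    rw [hD, hDu', ← hF]
    linear_combination (F * u' * u') * hu - (F * u') * huu' - f * b * F * u' * u' * hu + f * b * F * u' * u' * hu
  -- first claim
  have claim1 : D (f * u') * G' = 1 := by
    rw [hG, hG']
    linear_combination (F * F' * (u * u') * (u * u')) * haa'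
      + ((u * u') * (u * u')) * hFF' + (u * u' + 1) * huu'
  refine ⟨claim1, ?_⟩
  -- second derivative of f·u'
  have hDDfu' : D (D (f * u')) = a * (D F * (u' * u') + F * (2 * (u' * D u'))) := by
    rw [hG]
    rw [show a * F * (u' * u') = a * (F * (u' * u')) by ring, hD, hDa, zero_mul, zero_add]
    rw [hD F (u' * u'), hD u' u']
    ring
  -- P-tilde
  have hPt : D (D (f * u')) * G' = D F * F' - 2 * (b * (F * u')) := by
    rw [hDDfu', hG', hDu']
    trans ((a * a') * ((u * u') * (u * u')) * (D F * F')
      - 2 * ((a * a') * ((u * u') * (u * u')) * (F * F') * (b * (F * u'))))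
    · ring
    · rw [haa', huu', hFF']; ring
  have key : D (D (D (f * u')) * G')
      - half * ((D (D (f * u')) * G') * (D (D (f * u')) * G'))
      = D (D F * F') - half * ((D F * F') * (D F * F')) := by
    rw [hPt, hDsub, hD2, hD b (F * u'), hD F u', hDb, hDu']
    linear_combination (2 * b * (D F) * F' * F * u' - 2 * b * b * F * F * u' * u') * hhalf
      + (2 * b * (D F) * u') * hFF'
  rw [← hF]
  exact key

end NovProof

namespace NovProof
open Nov Function

variable {r : ℕ} {μ ν : H r →+ ℤ} {Astar : H r} {z : H r → (H r →+ ℚ)}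

/-- The derivation `∂_z` at the level of `NovR`. -/
noncomputable def DN (hz : Admissible μ ν Astar z) (hνA : ν Astar = -1)
    (X : NovR r ν) : NovR r ν :=
  ⟨dz z X.1, by
    obtain ⟨m, hm⟩ := nufin_exists_ge X.2
    exact nufin_dz hz hνA X.2 hm⟩

variable (hz : Admissible μ ν Astar z) (hνA : ν Astar = -1)

lemma DN_mul (X Y : NovR r ν) :
    DN hz hνA (X * Y) = DN hz hνA X * Y + X * DN hz hνA Y := by
  obtain ⟨m₁, h₁⟩ := nufin_exists_ge X.2
  obtain ⟨m₂, h₂⟩ := nufin_exists_ge Y.2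
  exact Subtype.ext (dz_mul hz hνA X.2 Y.2 h₁ h₂)

lemma DN_add (X Y : NovR r ν) :
    DN hz hνA (X + Y) = DN hz hνA X + DN hz hνA Y :=
  Subtype.ext (dz_add hz hνA X.2 Y.2)

lemma DN_GE {m : ℤ} {X : NovR r ν} (hX : X.GE' m) : (DN hz hνA X).GE' (m - 1) :=
  memGE_dz hz hνA hX

lemma GE'_mono {m m' : ℤ} (h : m ≤ m') {X : NovR r ν} (hX : X.GE' m') : X.GE' m :=
  fun A hA => le_trans h (hX A hA)

/-- `δ_{A₀}` as an element of `NovR`. -/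
noncomputable def deltaN (ν : H r →+ ℤ) (A₀ : H r) : NovR r ν := ⟨delta A₀, nufin_delta A₀⟩

/-- The key estimate: for `X ∈ Λ_{≥1}`, `∂_z X ≡ q^{A_*}·X mod Λ_{≥1}`. -/
lemma DN_sub_delta_GE {X : NovR r ν} (hX : X.GE' 1) :
    (DN hz hνA X - deltaN ν Astar * X).GE' 1 := by
  intro A hA
  by_contra hc
  push_neg at hc
  have hA0 : ν A ≤ 0 := by omega
  have hval : (DN hz hνA X - deltaN ν Astar * X).1 A
      = dz z X.1 A - X.1 (A - Astar) := by
    show dz z X.1 A - mul (delta Astar) X.1 A = _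
    rw [delta_mul_apply]
  have hsingle : dz z X.1 A = z Astar (A - Astar) * X.1 (A - Astar) := by
    show (∑ᶠ B, z (A - B) B * X.1 B) = _
    rw [finsum_eq_single _ (A - Astar) ?_]
    · rw [sub_sub_cancel]
    · intro B hB
      by_contra hB0
      have h1 : z (A - B) B ≠ 0 := fun h => hB0 (by simp [h])
      have h2 : X.1 B ≠ 0 := fun h => hB0 (by simp [h])
      have h3 := hX _ h2
      have h4 : ν (A - B) = ν A - ν B := by rw [map_sub]
      by_cases h5 : 0 ≤ ν (A - B)
      · omega
      · have h6 : A - B = Astar := by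
          by_contra h7
          exact z_ne_zero h1 (hz.vanish_neg _ h7 (by omega))
        exact hB (by rw [← h6]; abel)
  have hnu : ν (A - Astar) = ν A + 1 := by rw [map_sub, hνA]; omega
  have hstar : z Astar (A - Astar) = ((ν A + 1 : ℤ) : ℚ) := by
    rw [hz.at_star, hnu]
  rw [hval, hsingle, hstar] at hA
  by_cases ht : X.1 (A - Astar) = 0
  · rw [ht, mul_zero, sub_zero] at hA
    exact hA rfl
  · have h8 := hX _ ht
    have h9 : ν A = 0 := by omega
    rw [h9] at hA
    norm_num at hA

end NovProof

namespace NovProof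
open Nov Function

variable {r : ℕ} {μ ν : H r →+ ℤ} {Astar : H r} {z : H r → (H r →+ ℚ)}

/-- The element `½·1` of `NovR`. -/
noncomputable def halfN (r : ℕ) (ν : H r →+ ℤ) : NovR r ν :=
  ⟨(1 / 2 : ℚ) • one r, nufin_smul _ nufin_one⟩

lemma two_halfN : 2 * halfN r ν = 1 := by
  have h2 : (2 : NovR r ν) * halfN r ν = halfN r ν + halfN r ν := by ring
  rw [h2]
  apply Subtype.ext
  funext A
  show ((1 / 2 : ℚ) • one r) A + ((1 / 2 : ℚ) • one r) A = one r A
  simp only [Pi.smul_apply, smul_eq_mul]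
  ring

variable (hz : Admissible μ ν Astar z) (hνA : ν Astar = -1)

/-- Expressing `Sz` via `NovR` operations, given the inverse of `∂_z x`. -/
lemma Sz_val (x : H r → ℚ) (X T : NovR r ν) (hx : X.1 = x)
    (hT : invN μ ν (dz z x) = T.1) :
    Sz μ ν z x = (DN hz hνA (DN hz hνA (DN hz hνA X) * T)
      - halfN r ν * ((DN hz hνA (DN hz hνA X) * T)
          * (DN hz hνA (DN hz hνA X) * T))).1 := by
  subst hx
  show dz z (mul (dz z (dz z X.1)) (invN μ ν (dz z X.1)))
      - (1 / 2 : ℚ) • mul (mul (dz z (dz z X.1)) (invN μ ν (dz z X.1)))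
          (mul (dz z (dz z X.1)) (invN μ ν (dz z X.1))) = _
  rw [hT, ← smul_one_mul (1 / 2 : ℚ)
    (mul (mul (dz z (dz z X.1)) T.1) (mul (dz z (dz z X.1)) T.1))]
  rfl

end NovProof

namespace NovProof
open Nov Function NovR

set_option maxHeartbeats 1000000 in
theorem main  (r : ℕ) (μ ν : H r →+ ℤ)
    (Astar : H r) (hμA : μ Astar = 1) (hνA : ν Astar = -1)
    (z : H r → (H r →+ ℚ)) (hz : Admissible μ ν Astar z)
    (i : ℤ) (hi : Even i) (f : H r → ℚ)
    (hf : MemHom μ ν i f) (hge : MemGE ν 1 f)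
    (hinv : ∃ y, MemLambda μ ν y ∧ MemGE ν 0 y ∧
        mul (mul (delta Astar) f) y = one r ∧
        mul y (mul (delta Astar) f) = one r)
    (k : ℤ) (a b : H r → ℚ)
    (ha : MemHom μ ν k a) (hage : MemGE ν 0 a)
    (hainv : ∃ y, MemLambda μ ν y ∧ MemGE ν 0 y ∧
        mul a y = one r ∧ mul y a = one r)
    (hda : dz z a = 0)
    (hb : MemHom μ ν (k - i) b) (hbge : MemGE ν 0 b) (hdb : dz z b = 0) :
    (∃ c, MemLambda μ ν c ∧ mul (a + mul b f) c = one r ∧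
        mul c (a + mul b f) = one r) ∧
    MemHom μ ν (i - k) (mul f (invN μ ν (a + mul b f))) ∧
    MemGE ν 1 (mul f (invN μ ν (a + mul b f))) ∧
    (∃ y, MemLambda μ ν y ∧ MemGE ν 0 y ∧
        mul (mul (delta Astar) (mul f (invN μ ν (a + mul b f)))) y = one r ∧
        mul y (mul (delta Astar) (mul f (invN μ ν (a + mul b f)))) = one r) ∧
    Sz μ ν z (mul f (invN μ ν (a + mul b f))) = Sz μ ν z f
 := by
  classical
  obtain ⟨y₀, hy₀L, hy₀ge, hy₀1, hy₀2⟩ := hainv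
  obtain ⟨y₁, hy₁L, hy₁ge, hy₁1, hy₁2⟩ := hinv
  set Φ : NovR r ν := ⟨f, hf.2⟩ with hΦ
  set Aν : NovR r ν := ⟨a, ha.2⟩ with hAν
  set Bν : NovR r ν := ⟨b, hb.2⟩ with hBν
  set A'₀ : NovR r ν := ⟨y₀, hy₀L.1⟩ with hA'₀
  set Yg : NovR r ν := ⟨y₁, hy₁L.1⟩ with hYg
  set U : NovR r ν := Aν + Bν * Φ with hU
  have hfhom : IsHom μ i Φ.1 := hf.1
  have hahom : IsHom μ k Aν.1 := ha.1
  have hUhom : IsHom μ k U.1 := by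
    have h1 : IsHom μ (k - i + i) (mul b f) := isHom_mul hb.1 hf.1
    rw [sub_add_cancel] at h1
    exact isHom_add ha.1 h1
  have hΦge : Φ.GE' 1 := hge
  have hAge : Aν.GE' 0 := hage
  have hBge : Bν.GE' 0 := hbge
  have hA'ge : A'₀.GE' 0 := hy₀ge
  have hYgge : Yg.GE' 0 := hy₁ge
  have hBfge : (Bν * Φ).GE' 0 := GE'_mono (by omega) (hBge.mul hΦge)
  have hUge : U.GE' 0 := hAge.add hBfge
  have haA'₀ : Aν * A'₀ = 1 := Subtype.ext hy₀1
  have hgY : (deltaN ν Astar * Φ) * Yg = 1 := Subtype.ext hy₁1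
  have hWge : (A'₀ * (Bν * Φ)).GE' 1 :=
    GE'_mono (by omega) (hA'ge.mul (hBge.mul hΦge))
  obtain ⟨S, hSge, hS1⟩ := NovR.geom_inverse hWge
  have hUfac : U = Aν * (1 + A'₀ * (Bν * Φ)) := by
    have e : Aν * (1 + A'₀ * (Bν * Φ)) = Aν + (Aν * A'₀) * (Bν * Φ) := by ring
    rw [e, haA'₀, one_mul, hU]
  set U'₀ : NovR r ν := S * A'₀ with hU'₀def
  have hUU'₀ : U * U'₀ = 1 := by
    rw [hUfac, hU'₀def]
    calc Aν * (1 + A'₀ * (Bν * Φ)) * (S * A'₀)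
        = ((1 + A'₀ * (Bν * Φ)) * S) * (Aν * A'₀) := by ring
      _ = 1 := by rw [hS1, haA'₀, one_mul]
  have hU'₀ge : U'₀.GE' 0 := GE'_mono (by omega) (hSge.mul hA'ge)
  set U' : NovR r ν := compN μ (-k) U'₀ with hU'def
  have hU'ge : U'.GE' 0 := compN_GE hU'₀ge
  have hU'hom : IsHom μ (-k) U'.1 := compN_isHom _ _
  have hUU' : U * U' = 1 := by
    rw [hU'def, mul_compN hUhom, hUU'₀, show k + -k = 0 by omega, compN_one]
  have hU'L : MemLambda μ ν U'.1 := memLambda_of_isHom hU'hom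
  have hU'U : U' * U = 1 := by rw [mul_comm]; exact hUU'
  have hinv1 : invN μ ν (a + mul b f) = U'.1 := invN_eq U U' hU'L hUU'
  -- the derivative of f and its inverse
  set F : NovR r ν := DN hz hνA Φ with hFdef
  have hFhom : IsHom μ (i + 2) F.1 := isHom_dz hz hf.1
  have hE : F * Yg - 1 = (F - deltaN ν Astar * Φ) * Yg := by
    rw [sub_mul, hgY]
  have hEge : (F * Yg - 1).GE' 1 := by
    rw [hE]
    exact GE'_mono (by omega) ((DN_sub_delta_GE hz hνA hΦge).mul hYgge)
  obtain ⟨V, hVge, hFV⟩ := NovR.exists_inv_of_almost hYgge hEge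
  set F' : NovR r ν := compN μ (-(i + 2)) V with hF'def
  have hFF' : F * F' = 1 := by
    rw [hF'def, mul_compN hFhom, hFV, show i + 2 + -(i + 2) = 0 by omega, compN_one]
  have hF'hom : IsHom μ (-(i + 2)) F'.1 := compN_isHom _ _
  have hF'L : MemLambda μ ν F'.1 := memLambda_of_isHom hF'hom
  have hinvF : invN μ ν (dz z f) = F'.1 := invN_eq F F' hF'L hFF'
  -- the homogeneous inverse of a
  set A'ₕ : NovR r ν := compN μ (-k) A'₀ with hA'ₕdef
  have haA'ₕ : Aν * A'ₕ = 1 := by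
    rw [hA'ₕdef, mul_compN hahom, haA'₀, show k + -k = 0 by omega, compN_one]
  have hA'ₕhom : IsHom μ (-k) A'ₕ.1 := compN_isHom _ _
  set G' : NovR r ν := A'ₕ * U * U * F' with hG'def
  have hG'hom : IsHom μ (-k + k + k + -(i + 2)) G'.1 :=
    isHom_mul (isHom_mul (isHom_mul hA'ₕhom hUhom) hUhom) hF'hom
  have hG'L : MemLambda μ ν G'.1 := memLambda_of_isHom hG'hom
  have hDa : DN hz hνA Aν = 0 := Subtype.ext hda
  have hDb : DN hz hνA Bν = 0 := Subtype.ext hdb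
  obtain ⟨calc1, calc2⟩ := schwarz_calc (DN hz hνA) (DN_mul hz hνA) (DN_add hz hνA)
    Φ Aν Bν U U' A'ₕ F F' G' (halfN r ν) hU hUU' haA'ₕ hFdef hFF' hG'def hDa hDb
    two_halfN
  have hinvG : invN μ ν (dz z (mul f U'.1)) = G'.1 :=
    invN_eq (DN hz hνA (Φ * U')) G' hG'L calc1
  refine ⟨⟨U'.1, hU'L, congrArg Subtype.val hUU', congrArg Subtype.val hU'U⟩,
    ?_, ?_, ?_, ?_⟩
  · -- f·(a+bf)⁻¹ ∈ Λ^{i-k}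
    rw [hinv1]
    refine ⟨?_, (Φ * U').2⟩
    have h1 := isHom_mul hf.1 hU'hom
    rw [show i + -k = i - k by omega] at h1
    exact h1
  · -- f·(a+bf)⁻¹ ∈ Λ_{≥1}
    rw [hinv1]
    have h2 := memGE_mul hge hU'ge
    rw [show (1 : ℤ) + 0 = 1 by omega] at h2
    exact h2
  · -- q^{A*}·f̃ invertible
    rw [hinv1]
    refine ⟨(U * Yg).1, memLambda_mul hUhom hy₁L,
      GE'_mono (by omega) (hUge.mul hYgge), ?_, ?_⟩
    · have e : (deltaN ν Astar * (Φ * U')) * (U * Yg) = 1 := by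
        calc (deltaN ν Astar * (Φ * U')) * (U * Yg)
            = ((deltaN ν Astar * Φ) * Yg) * (U' * U) := by ring
          _ = 1 := by rw [hgY, hU'U, mul_one]
      exact congrArg Subtype.val e
    · have e : (U * Yg) * (deltaN ν Astar * (Φ * U')) = 1 := by
        calc (U * Yg) * (deltaN ν Astar * (Φ * U'))
            = ((deltaN ν Astar * Φ) * Yg) * (U' * U) := by ring
          _ = 1 := by rw [hgY, hU'U, mul_one]
      exact congrArg Subtype.val e
  · -- Schwarzian invariance
    rw [hinv1, Sz_val hz hνA (mul f U'.1) (Φ * U') G' rfl hinvG,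
      Sz_val hz hνA f Φ F' rfl hinvF]
    exact congrArg Subtype.val calc2


end NovProof

open Nov in
/-- Invariance of the Schwarzian `S_z` under `f ↦ f·(a + b·f)⁻¹` with
`∂_z`-constant homogeneous `a` (invertible in `Λ_{≥0}`) and `b`: the element
`a + b·f` is invertible, `f̃ = f·(a + b·f)⁻¹` lies in `Λ^{i−k}_{≥1}` with
`q^{A_*}·f̃` invertible in `Λ_{≥0}`, and `S_z f̃ = S_z f`. -/
theorem schwarzian_invariant_under_transformations (r : ℕ) (μ ν : H r →+ ℤ)
    (Astar : H r) (hμA : μ Astar = 1) (hνA : ν Astar = -1)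
    (z : H r → (H r →+ ℚ)) (hz : Admissible μ ν Astar z)
    (i : ℤ) (hi : Even i) (f : H r → ℚ)
    (hf : MemHom μ ν i f) (hge : MemGE ν 1 f)
    (hinv : ∃ y, MemLambda μ ν y ∧ MemGE ν 0 y ∧
        mul (mul (delta Astar) f) y = one r ∧
        mul y (mul (delta Astar) f) = one r)
    (k : ℤ) (a b : H r → ℚ)
    (ha : MemHom μ ν k a) (hage : MemGE ν 0 a)
    (hainv : ∃ y, MemLambda μ ν y ∧ MemGE ν 0 y ∧
        mul a y = one r ∧ mul y a = one r)
    (hda : dz z a = 0)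
    (hb : MemHom μ ν (k - i) b) (hbge : MemGE ν 0 b) (hdb : dz z b = 0) :
    (∃ c, MemLambda μ ν c ∧ mul (a + mul b f) c = one r ∧
        mul c (a + mul b f) = one r) ∧
    MemHom μ ν (i - k) (mul f (invN μ ν (a + mul b f))) ∧
    MemGE ν 1 (mul f (invN μ ν (a + mul b f))) ∧
    (∃ y, MemLambda μ ν y ∧ MemGE ν 0 y ∧
        mul (mul (delta Astar) (mul f (invN μ ν (a + mul b f)))) y = one r ∧
        mul y (mul (delta Astar) (mul f (invN μ ν (a + mul b f)))) = one r) ∧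
    Sz μ ν z (mul f (invN μ ν (a + mul b f))) = Sz μ ν z f :=
  NovProof.main r μ ν Astar hμA hνA z hz i hi f hf hge hinv k a b ha hage hainv hda
    hb hbge hdb
end
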